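/- arXiv:1907.10968 — 9 statements merged into one kernel-verified Lean document; each statement's English description precedes it below -/
import Mathlib

section
/- The set 𝒫(ℝ) of Borel probability measures on ℝ, ordered by first order stochastic dominance, is a lattice: for any μ, ν ∈ 𝒫(ℝ), the functions s ↦ max(F_μ(s), F_ν(s)) and s ↦ min(F_μ(s), F_ν(s)) are distribution functions of probability measures, which are respectively the greatest lower bound and least upper bound of {μ, ν} with respect to first order stochastic dominance. -/
open MeasureTheory Set

open ProbabilityTheory Filter Topology in
private lemma fosd_aux (μ ν : Measure ℝ) [IsProbabilityMeasure μ] [IsProbabilityMeasure ν] :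
    ∃ l : Measure ℝ, IsProbabilityMeasure l ∧
      (∀ s : ℝ, l (Iic s) = max (μ (Iic s)) (ν (Iic s))) := by
  set f : StieltjesFunction ℝ :=
    { toFun := fun s => max (cdf μ s) (cdf ν s)
      mono' := fun a b hab => max_le_max (monotone_cdf μ hab) (monotone_cdf ν hab)
      right_continuous' := fun x =>
        ((cdf μ).right_continuous x).max ((cdf ν).right_continuous x) } with hf
  have hbot : Tendsto f atBot (𝓝 0) := by
    have := (tendsto_cdf_atBot μ).max (tendsto_cdf_atBot ν)
    simpa using this
  have htop : Tendsto f atTop (𝓝 1) := by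
    have := (tendsto_cdf_atTop μ).max (tendsto_cdf_atTop ν)
    simpa using this
  refine ⟨f.measure, f.isProbabilityMeasure hbot htop, fun s => ?_⟩
  rw [f.measure_Iic hbot s, ← ofReal_cdf μ s, ← ofReal_cdf ν s]
  simp only [hf, sub_zero]
  have hm : Monotone ENNReal.ofReal := fun _ _ h => ENNReal.ofReal_le_ofReal h
  exact hm.map_max

open ProbabilityTheory Filter Topology in
private lemma fosd_aux_min (μ ν : Measure ℝ) [IsProbabilityMeasure μ] [IsProbabilityMeasure ν] :
    ∃ u : Measure ℝ, IsProbabilityMeasure u ∧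
      (∀ s : ℝ, u (Iic s) = min (μ (Iic s)) (ν (Iic s))) := by
  set f : StieltjesFunction ℝ :=
    { toFun := fun s => min (cdf μ s) (cdf ν s)
      mono' := fun a b hab => min_le_min (monotone_cdf μ hab) (monotone_cdf ν hab)
      right_continuous' := fun x =>
        ((cdf μ).right_continuous x).min ((cdf ν).right_continuous x) } with hf
  have hbot : Tendsto f atBot (𝓝 0) := by
    have := (tendsto_cdf_atBot μ).min (tendsto_cdf_atBot ν)
    simpa using this
  have htop : Tendsto f atTop (𝓝 1) := by
    have := (tendsto_cdf_atTop μ).min (tendsto_cdf_atTop ν)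
    simpa using this
  refine ⟨f.measure, f.isProbabilityMeasure hbot htop, fun s => ?_⟩
  rw [f.measure_Iic hbot s, ← ofReal_cdf μ s, ← ofReal_cdf ν s]
  simp only [hf, sub_zero]
  have hm : Monotone ENNReal.ofReal := fun _ _ h => ENNReal.ofReal_le_ofReal h
  exact hm.map_min

/-- `𝒫(ℝ)` with first order stochastic dominance is a lattice: the pointwise max of two
cdf's is the cdf of a probability measure which is the greatest lower bound of the pair,
and the pointwise min is the cdf of a probability measure which is the least upper bound. -/
theorem fosd_lattice (μ ν : Measure ℝ)
    [IsProbabilityMeasure μ] [IsProbabilityMeasure ν] :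
    (∃ l : Measure ℝ, IsProbabilityMeasure l ∧
      (∀ s : ℝ, l (Iic s) = max (μ (Iic s)) (ν (Iic s))) ∧
      -- l ≤ˢᵗ μ and l ≤ˢᵗ ν
      (∀ s : ℝ, μ (Iic s) ≤ l (Iic s)) ∧ (∀ s : ℝ, ν (Iic s) ≤ l (Iic s)) ∧
      -- l is the greatest lower bound
      (∀ η : Measure ℝ, IsProbabilityMeasure η →
        (∀ s : ℝ, μ (Iic s) ≤ η (Iic s)) → (∀ s : ℝ, ν (Iic s) ≤ η (Iic s)) →
        (∀ s : ℝ, l (Iic s) ≤ η (Iic s)))) ∧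
    (∃ u : Measure ℝ, IsProbabilityMeasure u ∧
      (∀ s : ℝ, u (Iic s) = min (μ (Iic s)) (ν (Iic s))) ∧
      -- μ ≤ˢᵗ u and ν ≤ˢᵗ u
      (∀ s : ℝ, u (Iic s) ≤ μ (Iic s)) ∧ (∀ s : ℝ, u (Iic s) ≤ ν (Iic s)) ∧
      -- u is the least upper bound
      (∀ η : Measure ℝ, IsProbabilityMeasure η →
        (∀ s : ℝ, η (Iic s) ≤ μ (Iic s)) → (∀ s : ℝ, η (Iic s) ≤ ν (Iic s)) →
        (∀ s : ℝ, η (Iic s) ≤ u (Iic s)))) := by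
  obtain ⟨l, hlP, hl⟩ := fosd_aux μ ν
  obtain ⟨u, huP, hu⟩ := fosd_aux_min μ ν
  refine ⟨⟨l, hlP, hl, fun s => (hl s).symm ▸ le_max_left _ _,
      fun s => (hl s).symm ▸ le_max_right _ _,
      fun η _ h1 h2 s => (hl s).symm ▸ max_le (h1 s) (h2 s)⟩,
    ⟨u, huP, hu, fun s => (hu s).symm ▸ min_le_left _ _,
      fun s => (hu s).symm ▸ min_le_right _ _,
      fun η _ h1 h2 s => (hu s).symm ▸ le_min (h1 s) (h2 s)⟩⟩
end

section
/- Let μ^Max be the probability measure on [0,∞) with distribution function F(s) = max(1 - C/ψ(s), 0), where ψ : [0,∞) → [0,∞) is continuous and strictly increasing with ψ(s) → ∞ as s → ∞ and C ≥ ψ(0). Then for every β ∈ (0,1), ∫_{[0,∞)} ψ(s)^β dμ^Max(s) = ∫_0^1 (C/(1-u))^β du < ∞. -/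
open MeasureTheory Set Filter

/-- For the measure `μMax` on `[0,∞)` with cdf `max (1 - C/ψ(s)) 0`, the β-th ψ-moment
equals the Beta-type integral `∫₀¹ (C/(1-u))^β du`, which is finite for `β ∈ (0,1)`. -/
theorem psi_beta_moment_of_muMax (ψ : ℝ → ℝ)
    (hψnonneg : ∀ r ∈ Ici (0:ℝ), 0 ≤ ψ r)
    (hψcont : ContinuousOn ψ (Ici (0:ℝ)))
    (hψmono : StrictMonoOn ψ (Ici (0:ℝ)))
    (hψtop : Tendsto ψ atTop atTop)
    (C : ℝ) (hC : ψ 0 ≤ C)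
    (μMax : Measure ℝ) [IsProbabilityMeasure μMax]
    (hsupp : μMax (Iio (0:ℝ)) = 0)
    (hcdf : ∀ s : ℝ, 0 ≤ s → (μMax (Iic s)).toReal = max (1 - C / ψ s) 0) :
    ∀ β ∈ Ioo (0:ℝ) 1,
      Integrable (fun s => ψ s ^ β) μMax ∧
      IntervalIntegrable (fun u => (C / (1 - u)) ^ β) MeasureTheory.volume 0 1 ∧
      ∫ s, ψ s ^ β ∂μMax = ∫ u in (0:ℝ)..1, (C / (1 - u)) ^ β := by
  intro β hβ
  obtain ⟨hβ0, hβ1⟩ := hβ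
  have hψ0 : 0 ≤ ψ 0 := hψnonneg 0 self_mem_Ici
  have hC0 : 0 ≤ C := hψ0.trans hC
  set f : ℝ → ℝ := fun s => ψ (max s 0) ^ β with hf
  have hcont : Continuous f := by
    have h1 : Continuous fun s : ℝ => ψ (max s 0) :=
      hψcont.comp_continuous (continuous_id.max continuous_const)
        (fun x => mem_Ici.mpr (le_max_right _ _))
    exact h1.rpow_const (fun x => Or.inr hβ0.le)
  have hfnn : ∀ s, 0 ≤ f s := fun s =>
    Real.rpow_nonneg (hψnonneg _ (mem_Ici.mpr (le_max_right _ _))) β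
  have hae : ∀ᵐ s ∂μMax, s ∈ Ici (0:ℝ) := by
    have hcompl : {s : ℝ | ¬ s ∈ Ici (0:ℝ)} = Iio 0 := by ext s; simp [not_le]
    rw [ae_iff, hcompl]; exact hsupp
  have hfe : (fun s => ψ s ^ β) =ᵐ[μMax] f :=
    hae.mono fun s hs => by simp only [hf, max_eq_left (mem_Ici.mp hs)]
  -- measure of upper level sets
  have hmeas : ∀ r : ℝ, 0 < r →
      μMax {a | r < ψ (max a 0)} = ENNReal.ofReal (min (C / r) 1) := by
    intro r hr
    rcases lt_or_ge r (ψ 0) with h0 | h0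
    · have hset : {a : ℝ | r < ψ (max a 0)} = univ := by
        ext a
        simp only [mem_setOf_eq, mem_univ, iff_true]
        exact h0.trans_le
          (hψmono.monotoneOn self_mem_Ici (mem_Ici.mpr (le_max_right a 0))
            (le_max_right a 0))
      have h1 : (1:ℝ) < C / r := (one_lt_div hr).mpr (h0.trans_le hC)
      rw [hset, measure_univ, min_eq_right h1.le, ENNReal.ofReal_one]
    · obtain ⟨b, hbr, hb0⟩ :=
        ((hψtop.eventually_ge_atTop r).and (eventually_ge_atTop (0:ℝ))).exists
      obtain ⟨s₀, hs₀mem, hs₀⟩ :=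
        intermediate_value_Icc hb0 (hψcont.mono Icc_subset_Ici_self) ⟨h0, hbr⟩
      have hs₀0 : (0:ℝ) ≤ s₀ := hs₀mem.1
      have hset : {a : ℝ | r < ψ (max a 0)} = Ioi s₀ := by
        ext a
        simp only [mem_setOf_eq, mem_Ioi]
        constructor
        · intro h
          by_contra hle
          push_neg at hle
          have hle' : ψ (max a 0) ≤ ψ s₀ :=
            hψmono.monotoneOn (mem_Ici.mpr (le_max_right a 0)) (mem_Ici.mpr hs₀0)
              (max_le hle hs₀0)
          rw [hs₀] at hle'
          exact absurd h (not_lt.mpr hle')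
        · intro h
          have ha0 : (0:ℝ) ≤ a := hs₀0.trans h.le
          rw [max_eq_left ha0, ← hs₀]
          exact hψmono (mem_Ici.mpr hs₀0) (mem_Ici.mpr ha0) h
      have h1 : (μMax (Iic s₀)).toReal = max (1 - C / r) 0 := by
        rw [hcdf s₀ hs₀0, hs₀]
      have h2 : μMax (Iic s₀) = ENNReal.ofReal (max (1 - C / r) 0) := by
        rw [← h1, ENNReal.ofReal_toReal (measure_ne_top _ _)]
      have hcr : 0 ≤ C / r := div_nonneg hC0 hr.le
      have hmin : (1:ℝ) - max (1 - C / r) 0 = min (C / r) 1 := by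
        rcases le_total (C / r) 1 with h | h
        · rw [max_eq_left (by linarith), min_eq_left h]; ring
        · rw [max_eq_right (by linarith), min_eq_right h]; ring
      rw [hset, ← compl_Iic, measure_compl measurableSet_Iic (measure_ne_top _ _),
        measure_univ, h2, ← ENNReal.ofReal_one,
        ← ENNReal.ofReal_sub 1 (le_max_right _ _), hmin]
  -- level sets of f
  have hsets : ∀ t : ℝ, 0 < t →
      {a : ℝ | t < f a} = {a : ℝ | t ^ β⁻¹ < ψ (max a 0)} := by
    intro t ht
    ext a
    simp only [mem_setOf_eq, hf]
    exact (Real.rpow_inv_lt_iff_of_pos ht.le (hψnonneg _ (mem_Ici.mpr (le_max_right a 0))) hβ0).symm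
  -- layer cake
  have hlayer : ∫⁻ a, ENNReal.ofReal (f a) ∂μMax
      = ∫⁻ t in Ioi (0:ℝ), ENNReal.ofReal (min (C / t ^ β⁻¹) 1) := by
    rw [lintegral_eq_lintegral_meas_lt μMax (Eventually.of_forall hfnn)
      hcont.measurable.aemeasurable]
    refine setLIntegral_congr_fun measurableSet_Ioi (fun t ht => ?_)
    rw [hsets t ht, hmeas _ (Real.rpow_pos_of_pos ht β⁻¹)]
  have h1β : (0:ℝ) < 1 - β := by linarith
  have hVnn : 0 ≤ C ^ β / (1 - β) := div_nonneg (Real.rpow_nonneg hC0 β) h1β.le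
  -- compute the lintegral
  have hcalc : ∫⁻ t in Ioi (0:ℝ), ENNReal.ofReal (min (C / t ^ β⁻¹) 1)
      = ENNReal.ofReal (C ^ β / (1 - β)) := by
    rcases eq_or_lt_of_le hC0 with hCz | hCpos
    · rw [← hCz]
      simp [Real.zero_rpow hβ0.ne', min_eq_left (zero_le_one (α := ℝ))]
    · set A := C ^ β with hA
      have hApos : 0 < A := Real.rpow_pos_of_pos hCpos β
      have hiβ : 1 < β⁻¹ := one_lt_inv₀ hβ0 |>.mpr hβ1
      have hAC : A ^ β⁻¹ = C := by
        rw [hA, ← Real.rpow_mul hC0, mul_inv_cancel₀ hβ0.ne', Real.rpow_one]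
      have hsplit : Ioi (0:ℝ) = Ioc 0 A ∪ Ioi A := (Ioc_union_Ioi_eq_Ioi hApos.le).symm
      rw [hsplit, lintegral_union measurableSet_Ioi (Ioc_disjoint_Ioi le_rfl)]
      have hp1 : ∫⁻ t in Ioc (0:ℝ) A, ENNReal.ofReal (min (C / t ^ β⁻¹) 1)
          = ENNReal.ofReal A := by
        have hc1 : ∀ᵐ t ∂(volume : Measure ℝ), t ∈ Ioc (0:ℝ) A →
            ENNReal.ofReal (min (C / t ^ β⁻¹) 1) = 1 := by
          refine Eventually.of_forall fun t ht => ?_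
          have htpos : 0 < t := ht.1
          have hle : t ^ β⁻¹ ≤ C := by
            have := Real.rpow_le_rpow htpos.le ht.2 (inv_pos.mpr hβ0).le
            rwa [hAC] at this
          have h1le : (1:ℝ) ≤ C / t ^ β⁻¹ :=
            (one_le_div (Real.rpow_pos_of_pos htpos _)).mpr hle
          rw [min_eq_right h1le, ENNReal.ofReal_one]
        rw [setLIntegral_congr_fun_ae measurableSet_Ioc hc1, setLIntegral_one,
          Real.volume_Ioc, sub_zero]
      have hexp : -β⁻¹ < -1 := by linarith
      have hintg : IntegrableOn (fun t : ℝ => C * t ^ (-β⁻¹)) (Ioi A) volume :=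
        (integrableOn_Ioi_rpow_of_lt hexp hApos).const_mul C
      have hp2 : ∫⁻ t in Ioi A, ENNReal.ofReal (min (C / t ^ β⁻¹) 1)
          = ENNReal.ofReal (C ^ β * (β / (1 - β))) := by
        have hc2 : ∀ᵐ t ∂(volume : Measure ℝ), t ∈ Ioi A →
            ENNReal.ofReal (min (C / t ^ β⁻¹) 1)
              = ENNReal.ofReal (C * t ^ (-β⁻¹)) := by
          refine Eventually.of_forall fun t ht => ?_
          have htpos : 0 < t := hApos.trans ht
          have hlt : C < t ^ β⁻¹ := by
            have := Real.rpow_lt_rpow hApos.le ht (inv_pos.mpr hβ0)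
            rwa [hAC] at this
          have hmin : C / t ^ β⁻¹ ≤ 1 :=
            (div_le_one (Real.rpow_pos_of_pos htpos _)).mpr hlt.le
          rw [min_eq_left hmin, Real.rpow_neg htpos.le, div_eq_mul_inv]
        rw [setLIntegral_congr_fun_ae measurableSet_Ioi hc2,
          ← ofReal_integral_eq_lintegral_ofReal hintg
            ((ae_restrict_iff' measurableSet_Ioi).mpr (Eventually.of_forall fun t ht =>
              mul_nonneg hC0 (Real.rpow_nonneg (hApos.trans ht).le _)))]
        congr 1
        rw [integral_const_mul, integral_Ioi_rpow_of_lt hexp hApos]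
        have h5 : A ^ (-β⁻¹ + 1) = C ^ (β - 1) := by
          rw [hA, ← Real.rpow_mul hC0]
          congr 1
          field_simp
          ring
        have h6 : C * C ^ (β - 1) = C ^ β := by
          rw [show C * C ^ (β - 1) = C ^ (1:ℝ) * C ^ (β - 1) by rw [Real.rpow_one],
            ← Real.rpow_add hCpos]
          norm_num
        have hne : -β⁻¹ + 1 ≠ 0 := by
          intro h
          have : β⁻¹ = 1 := by linarith
          rw [this] at hiβ; exact lt_irrefl _ hiβ
        rw [h5, ← h6]
        field_simp [hne, hβ0.ne', h1β.ne', show (-1:ℝ) + β ≠ 0 from ne_of_lt (by linarith)]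
        ring
      rw [hp1, hp2, ← ENNReal.ofReal_add hApos.le
        (mul_nonneg (Real.rpow_nonneg hC0 β) (div_nonneg hβ0.le h1β.le)), hA]
      congr 1
      field_simp
      ring
  have hkey : ∫⁻ a, ENNReal.ofReal (f a) ∂μMax = ENNReal.ofReal (C ^ β / (1 - β)) :=
    hlayer.trans hcalc
  have hfint : Integrable f μMax := by
    refine ⟨hcont.aestronglyMeasurable, ?_⟩
    rw [hasFiniteIntegral_iff_ofReal (Eventually.of_forall hfnn), hkey]
    exact ENNReal.ofReal_lt_top
  have hψint : Integrable (fun s => ψ s ^ β) μMax := hfint.congr hfe.symm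
  have hLHS : ∫ s, ψ s ^ β ∂μMax = C ^ β / (1 - β) := by
    rw [integral_congr_ae hfe,
      integral_eq_lintegral_of_nonneg_ae (Eventually.of_forall hfnn)
        hcont.aestronglyMeasurable, hkey, ENNReal.toReal_ofReal hVnn]
  -- the RHS integral
  have hEq : EqOn (fun u : ℝ => (C / (1 - u)) ^ β)
      (fun u => C ^ β * (1 - u) ^ (-β)) (Icc (0:ℝ) 1) := by
    intro u hu
    have h1u : 0 ≤ 1 - u := by linarith [hu.2]
    simp only
    rw [Real.div_rpow hC0 h1u, Real.rpow_neg h1u, div_eq_mul_inv]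
  have hint2 : IntervalIntegrable (fun u : ℝ => C ^ β * (1 - u) ^ (-β)) volume 0 1 := by
    have h := ((intervalIntegral.intervalIntegrable_rpow' (a := 0) (b := 1)
      (show (-1:ℝ) < -β by linarith)).comp_sub_left 1)
    simpa using (h.const_mul (C ^ β)).symm
  have hintRHS : IntervalIntegrable (fun u : ℝ => (C / (1 - u)) ^ β) volume 0 1 := by
    rw [intervalIntegrable_iff_integrableOn_Icc_of_le zero_le_one] at hint2 ⊢
    exact hint2.congr_fun (fun u hu => (hEq hu).symm) measurableSet_Icc
  have hRHS : ∫ u in (0:ℝ)..1, (C / (1 - u)) ^ β = C ^ β / (1 - β) := by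
    have hEq' : EqOn (fun u : ℝ => (C / (1 - u)) ^ β)
        (fun u => C ^ β * (1 - u) ^ (-β)) (uIcc (0:ℝ) 1) := by
      rwa [uIcc_of_le zero_le_one]
    rw [intervalIntegral.integral_congr hEq', intervalIntegral.integral_const_mul]
    have hc : (∫ u in (0:ℝ)..1, (1 - u) ^ (-β)) = ∫ x in (0:ℝ)..1, x ^ (-β) := by
      have := intervalIntegral.integral_comp_sub_left (a := (0:ℝ)) (b := 1)
        (fun x : ℝ => x ^ (-β)) 1
      simpa using this
    rw [hc, integral_rpow (Or.inl (show (-1:ℝ) < -β by linarith)),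
      Real.one_rpow, Real.zero_rpow (show -β + 1 ≠ 0 from ne_of_gt (by linarith))]
    rw [show (1:ℝ) - 0 = 1 by ring]
    rw [mul_div_assoc']
    rw [mul_one]
    congr 1
    ring
  exact ⟨hψint, hintRHS, by rw [hLHS, hRHS]⟩
end

section
/- Let ψ : [0,∞) → [0,∞) be continuous and strictly increasing with ψ(s) → ∞ as s → ∞, C ≥ ψ(0), and let μ^Min, μ^Max be the probability measures with distribution functions min(C/ψ(-s),1) and max(1 - C/ψ(s),0) respectively. Then for every α ∈ (0,1), the family of functions x ↦ ψ(|x|)^α is uniformly integrable over the order interval [μ^Min, μ^Max] = {μ ∈ 𝒫(ℝ) : μ^Min ≤ˢᵗ μ ≤ˢᵗ μ^Max}; that is, sup_{μ ∈ [μ^Min,μ^Max]} ∫ 1_{|x| > M} ψ(|x|)^α dμ(x) → 0 as M → ∞. -/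
open MeasureTheory Set Filter

/-- Uniform integrability of `x ↦ ψ(|x|)^α`, `α ∈ (0,1)`, over the first-order-stochastic-
dominance order interval `[μMin, μMax]` determined by the explicit cdf's
`min (C/ψ(-s)) 1` and `max (1 - C/ψ(s)) 0`. -/
theorem unif_integrable_on_order_interval (ψ : ℝ → ℝ)
    (hψ0 : ∀ r < (0:ℝ), ψ r = ψ 0)
    (hψnonneg : ∀ r, 0 ≤ ψ r)
    (hψcont : ContinuousOn ψ (Ici (0:ℝ)))
    (hψmono : StrictMonoOn ψ (Ici (0:ℝ)))
    (hψtop : Tendsto ψ atTop atTop)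
    (C : ℝ) (hC : ψ 0 ≤ C)
    (μMin μMax : Measure ℝ) [IsProbabilityMeasure μMin] [IsProbabilityMeasure μMax]
    (hMin₁ : ∀ s < (0:ℝ), (μMin (Iic s)).toReal = min (C / ψ (-s)) 1)
    (hMin₂ : ∀ s : ℝ, 0 ≤ s → μMin (Iic s) = 1)
    (hMax₁ : ∀ s : ℝ, s ≤ 0 → μMax (Iic s) = 0)
    (hMax₂ : ∀ s : ℝ, 0 < s → (μMax (Iic s)).toReal = max (1 - C / ψ s) 0) :
    ∀ α ∈ Ioo (0:ℝ) 1, ∀ ε > (0:ℝ), ∃ M : ℝ,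
      ∀ μ : Measure ℝ, IsProbabilityMeasure μ →
        (∀ s : ℝ, μ (Iic s) ≤ μMin (Iic s)) →
        (∀ s : ℝ, μMax (Iic s) ≤ μ (Iic s)) →
        ∫⁻ x in {x : ℝ | M < |x|}, ENNReal.ofReal (ψ |x| ^ α) ∂μ ≤ ENNReal.ofReal ε := by
  have hCnn : 0 ≤ C := le_trans (hψnonneg 0) hC
  -- ψ is globally continuous
  have hψc : Continuous ψ := by
    have hfun : ψ = fun r => ψ (max r 0) := by
      funext r
      rcases le_or_gt 0 r with h | h
      · rw [max_eq_left h]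
      · rw [max_eq_right h.le, hψ0 r h]
    rw [hfun]
    exact hψcont.comp_continuous (continuous_id.max continuous_const)
      (fun x => mem_Ici.mpr (le_max_right _ _))
  -- choose s0 with ψ ≥ C + 1 beyond s0
  obtain ⟨s1, hs1⟩ := eventually_atTop.mp (hψtop.eventually_ge_atTop (C + 1))
  set s0 : ℝ := max s1 1 with hs0def
  have hs0pos : (0:ℝ) < s0 := lt_of_lt_of_le one_pos (le_max_right _ _)
  have hs0 : ∀ s, s0 ≤ s → C + 1 ≤ ψ s := fun s hs =>
    hs1 s (le_trans (le_max_left _ _) hs)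
  -- tail bound
  have tail : ∀ μ : Measure ℝ, IsProbabilityMeasure μ →
      (∀ s : ℝ, μ (Iic s) ≤ μMin (Iic s)) →
      (∀ s : ℝ, μMax (Iic s) ≤ μ (Iic s)) →
      ∀ s, s0 ≤ s → μ {x : ℝ | s < |x|} ≤ ENNReal.ofReal (2 * (C / ψ s)) := by
    intro μ hμ h1 h2 s hs
    have hspos : 0 < s := lt_of_lt_of_le hs0pos hs
    have hψs : C + 1 ≤ ψ s := hs0 s hs
    have hψspos : 0 < ψ s := by linarith
    have hdiv1 : C / ψ s ≤ 1 := (div_le_one hψspos).mpr (by linarith)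
    have hdivnn : 0 ≤ C / ψ s := div_nonneg hCnn hψspos.le
    have hleft : μ (Iic (-s)) ≤ ENNReal.ofReal (C / ψ s) := by
      refine le_trans (h1 (-s)) ?_
      have hm := hMin₁ (-s) (by linarith)
      rw [neg_neg] at hm
      rw [← ENNReal.ofReal_toReal (measure_ne_top μMin _), hm]
      exact ENNReal.ofReal_le_ofReal (min_le_left _ _)
    have hright : μ (Ioi s) ≤ ENNReal.ofReal (C / ψ s) := by
      have hmax : μMax (Iic s) = ENNReal.ofReal (1 - C / ψ s) := by
        have hm := hMax₂ s hspos
        rw [max_eq_left (by linarith)] at hm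
        rw [← ENNReal.ofReal_toReal (measure_ne_top μMax _), hm]
      have hIoi : μ (Ioi s) = 1 - μ (Iic s) := by
        rw [← compl_Iic]
        exact prob_compl_eq_one_sub measurableSet_Iic
      rw [hIoi]
      calc 1 - μ (Iic s) ≤ 1 - μMax (Iic s) := tsub_le_tsub_left (h2 s) 1
        _ = ENNReal.ofReal (C / ψ s) := by
            rw [hmax, ← ENNReal.ofReal_one, ← ENNReal.ofReal_sub _ (by linarith)]
            norm_num
    calc μ {x : ℝ | s < |x|} ≤ μ (Iic (-s) ∪ Ioi s) := by
          apply measure_mono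
          intro x hx
          simp only [mem_setOf_eq] at hx
          rcases lt_abs.mp hx with h | h
          · exact Or.inr h
          · exact Or.inl (by simp only [mem_Iic]; linarith)
      _ ≤ μ (Iic (-s)) + μ (Ioi s) := measure_union_le _ _
      _ ≤ ENNReal.ofReal (C / ψ s) + ENNReal.ofReal (C / ψ s) := add_le_add hleft hright
      _ = ENNReal.ofReal (2 * (C / ψ s)) := by
          rw [← ENNReal.ofReal_add hdivnn hdivnn]; ring_nf
  -- level-set bound
  have level : ∀ μ : Measure ℝ, IsProbabilityMeasure μ →
      (∀ s : ℝ, μ (Iic s) ≤ μMin (Iic s)) →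
      (∀ s : ℝ, μMax (Iic s) ≤ μ (Iic s)) →
      ∀ t, ψ s0 ≤ t → μ {x : ℝ | t < ψ |x|} ≤ ENNReal.ofReal (2 * (C / t)) := by
    intro μ hμ h1 h2 t ht
    obtain ⟨b0, hb0⟩ := eventually_atTop.mp (hψtop.eventually_ge_atTop t)
    set b : ℝ := max b0 s0 with hbdef
    have hbs0 : s0 ≤ b := le_max_right _ _
    have hbt : t ≤ ψ b := hb0 b (le_max_left _ _)
    obtain ⟨s, hsmem, hst⟩ := intermediate_value_Icc hbs0 hψc.continuousOn ⟨ht, hbt⟩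
    have hss0 : s0 ≤ s := hsmem.1
    have hsnn : (0:ℝ) ≤ s := le_trans hs0pos.le hss0
    have hsub : {x : ℝ | t < ψ |x|} ⊆ {x : ℝ | s < |x|} := by
      intro x hx
      simp only [mem_setOf_eq] at hx ⊢
      by_contra hcon
      push_neg at hcon
      have hle : ψ |x| ≤ ψ s :=
        hψmono.monotoneOn (mem_Ici.mpr (abs_nonneg x)) (mem_Ici.mpr hsnn) hcon
      rw [hst] at hle
      linarith
    calc μ {x : ℝ | t < ψ |x|} ≤ μ {x : ℝ | s < |x|} := measure_mono hsub
      _ ≤ ENNReal.ofReal (2 * (C / ψ s)) := tail μ hμ h1 h2 s hss0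
      _ = ENNReal.ofReal (2 * (C / t)) := by rw [hst]
  -- main argument
  intro α hα ε hε
  obtain ⟨hα0, hα1⟩ := hα
  have h1α : (0:ℝ) < 1 - α := by linarith
  set K : ℝ := 2 * C + α * (2 * C) / (1 - α) with hKdef
  have hKnn : 0 ≤ K := by positivity
  -- K * T^(α-1) → 0
  have htend : Tendsto (fun T : ℝ => K * T ^ (α - 1)) atTop (nhds 0) := by
    have h' : Tendsto (fun T : ℝ => T ^ (α - 1)) atTop (nhds 0) := by
      simpa only [show α - 1 = -(1 - α) by ring] using tendsto_rpow_neg_atTop h1α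
    simpa using h'.const_mul K
  obtain ⟨T1, hT1⟩ := eventually_atTop.mp (htend.eventually_lt_const hε)
  obtain ⟨M0, hM0⟩ := eventually_atTop.mp (hψtop.eventually_ge_atTop T1)
  refine ⟨max M0 s0, ?_⟩
  intro μ hμ h1 h2
  set M : ℝ := max M0 s0 with hMdef
  have hMs0 : s0 ≤ M := le_max_right _ _
  have hM0' : (0:ℝ) ≤ M := le_trans hs0pos.le hMs0
  set T : ℝ := ψ M with hTdef
  have hTC : C + 1 ≤ T := hs0 M hMs0
  have hTpos : (0:ℝ) < T := by linarith
  have hTne : T ≠ 0 := hTpos.ne'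
  have hTs0 : ψ s0 ≤ T :=
    hψmono.monotoneOn (mem_Ici.mpr hs0pos.le) (mem_Ici.mpr hM0') hMs0
  have hT1' : T1 ≤ T := hM0 M (le_max_left _ _)
  -- layer cake
  set ν : Measure ℝ := μ.restrict {x : ℝ | M < |x|} with hνdef
  have f_mble : AEMeasurable (fun x : ℝ => ψ |x|) ν :=
    (hψc.comp continuous_abs).aemeasurable
  have f_nn : 0 ≤ᵐ[ν] fun x : ℝ => ψ |x| := Filter.Eventually.of_forall fun x => hψnonneg _
  have key : ∫⁻ x in {x : ℝ | M < |x|}, ENNReal.ofReal (ψ |x| ^ α) ∂μ =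
      ENNReal.ofReal α *
        ∫⁻ t in Ioi (0:ℝ), ν {x : ℝ | t < ψ |x|} * ENNReal.ofReal (t ^ (α - 1)) :=
    lintegral_rpow_eq_lintegral_meas_lt_mul ν f_nn f_mble hα0
  -- split the t-integral
  have hsplit : ∫⁻ t in Ioi (0:ℝ), ν {x : ℝ | t < ψ |x|} * ENNReal.ofReal (t ^ (α - 1)) =
      (∫⁻ t in Ioc (0:ℝ) T, ν {x : ℝ | t < ψ |x|} * ENNReal.ofReal (t ^ (α - 1))) +
      ∫⁻ t in Ioi T, ν {x : ℝ | t < ψ |x|} * ENNReal.ofReal (t ^ (α - 1)) := by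
    rw [← Ioc_union_Ioi_eq_Ioi hTpos.le,
      lintegral_union measurableSet_Ioi (Ioc_disjoint_Ioi le_rfl)]
  -- bound on (0, T]
  have hν_univ : ν Set.univ ≤ ENNReal.ofReal (2 * (C / T)) := by
    rw [hνdef, Measure.restrict_apply_univ]
    exact tail μ hμ h1 h2 M hMs0
  have hint1 : ∫⁻ t in Ioc (0:ℝ) T, ENNReal.ofReal (t ^ (α - 1)) =
      ENNReal.ofReal (T ^ α / α) := by
    rw [← ofReal_integral_eq_lintegral_ofReal]
    · congr 1
      have heq : ∫ t in Ioc (0:ℝ) T, t ^ (α - 1) = ∫ t in (0:ℝ)..T, t ^ (α - 1) := by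
        rw [intervalIntegral.integral_of_le hTpos.le]
      rw [heq, integral_rpow (Or.inl (by linarith : (-1:ℝ) < α - 1))]
      rw [sub_add_cancel, Real.zero_rpow hα0.ne']
      ring
    · have hii := intervalIntegral.intervalIntegrable_rpow' (by linarith : (-1:ℝ) < α - 1) (a := (0:ℝ)) (b := T)
      rw [intervalIntegrable_iff, uIoc_of_le hTpos.le] at hii
      exact hii
    · filter_upwards [ae_restrict_mem measurableSet_Ioc] with t ht
      exact Real.rpow_nonneg ht.1.le _
  have hb1 : (∫⁻ t in Ioc (0:ℝ) T, ν {x : ℝ | t < ψ |x|} * ENNReal.ofReal (t ^ (α - 1))) ≤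
      ENNReal.ofReal (2 * (C / T)) * ENNReal.ofReal (T ^ α / α) := by
    rw [← hint1, ← lintegral_const_mul' _ _ ENNReal.ofReal_ne_top]
    refine lintegral_mono fun t => ?_
    exact mul_le_mul' (le_trans (measure_mono (subset_univ _)) hν_univ) le_rfl
  -- bound on (T, ∞)
  have hb2 : (∫⁻ t in Ioi T, ν {x : ℝ | t < ψ |x|} * ENNReal.ofReal (t ^ (α - 1))) ≤
      ENNReal.ofReal (2 * C * (T ^ (α - 1) / (1 - α))) := by
    have hstep : (∫⁻ t in Ioi T, ν {x : ℝ | t < ψ |x|} * ENNReal.ofReal (t ^ (α - 1))) ≤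
        ∫⁻ t in Ioi T, ENNReal.ofReal (2 * C * t ^ (α - 2)) := by
      refine lintegral_mono_ae ?_
      filter_upwards [ae_restrict_mem measurableSet_Ioi] with t ht
      have htT : T < t := ht
      have htpos : 0 < t := lt_trans hTpos htT
      have hlev := level μ hμ h1 h2 t (le_trans hTs0 htT.le)
      calc ν {x : ℝ | t < ψ |x|} * ENNReal.ofReal (t ^ (α - 1))
          ≤ ENNReal.ofReal (2 * (C / t)) * ENNReal.ofReal (t ^ (α - 1)) :=
            mul_le_mul' (le_trans (Measure.restrict_apply_le _ _) hlev) le_rfl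
        _ = ENNReal.ofReal (2 * C * t ^ (α - 2)) := by
            rw [← ENNReal.ofReal_mul (by positivity)]
            congr 1
            have hinv : t⁻¹ * t ^ (α - 1) = t ^ (α - 2) := by
              rw [← Real.rpow_neg_one t, ← Real.rpow_add htpos]
              congr 1
              ring
            calc 2 * (C / t) * t ^ (α - 1) = 2 * C * (t⁻¹ * t ^ (α - 1)) := by ring
              _ = 2 * C * t ^ (α - 2) := by rw [hinv]
    refine le_trans hstep (le_of_eq ?_)
    rw [← ofReal_integral_eq_lintegral_ofReal]
    · congr 1
      rw [MeasureTheory.integral_const_mul,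
        integral_Ioi_rpow_of_lt (by linarith : α - 2 < -1) hTpos]
      have : α - 2 + 1 = α - 1 := by ring
      rw [this]
      have hne1 : α - 1 ≠ 0 := by linarith
      have hne2 : (1:ℝ) - α ≠ 0 := by linarith
      field_simp
      ring
    · exact (integrableOn_Ioi_rpow_of_lt (by linarith : α - 2 < -1) hTpos).const_mul _
    · filter_upwards [ae_restrict_mem measurableSet_Ioi] with t ht
      have : 0 < t := lt_trans hTpos ht
      positivity
  -- assemble
  have hTT : T ^ α = T ^ (α - 1) * T := by
    rw [← Real.rpow_add_one hTne, sub_add_cancel]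
  have hrnn : (0:ℝ) ≤ T ^ (α - 1) := Real.rpow_nonneg hTpos.le _
  have hfinal : α * (2 * (C / T) * (T ^ α / α) + 2 * C * (T ^ (α - 1) / (1 - α))) =
      K * T ^ (α - 1) := by
    rw [hKdef, hTT]
    field_simp
  have hεbound : K * T ^ (α - 1) ≤ ε := (hT1 T hT1').le
  calc ∫⁻ x in {x : ℝ | M < |x|}, ENNReal.ofReal (ψ |x| ^ α) ∂μ
      = ENNReal.ofReal α *
        ∫⁻ t in Ioi (0:ℝ), ν {x : ℝ | t < ψ |x|} * ENNReal.ofReal (t ^ (α - 1)) := key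
    _ ≤ ENNReal.ofReal α *
        (ENNReal.ofReal (2 * (C / T)) * ENNReal.ofReal (T ^ α / α) +
          ENNReal.ofReal (2 * C * (T ^ (α - 1) / (1 - α)))) := by
        rw [hsplit]
        exact mul_le_mul' le_rfl (add_le_add hb1 hb2)
    _ = ENNReal.ofReal (α * (2 * (C / T) * (T ^ α / α) + 2 * C * (T ^ (α - 1) / (1 - α)))) := by
        rw [← ENNReal.ofReal_mul (by positivity), ← ENNReal.ofReal_add (by positivity)
          (by positivity), ← ENNReal.ofReal_mul hα0.le]
    _ ≤ ENNReal.ofReal ε := by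
        rw [hfinal]
        exact ENNReal.ofReal_le_ofReal hεbound
end

section
/- Let ψ(x) = x² and suppose μ^Min, μ^Max ∈ 𝒫(ℝ) are constructed as in the tightness lemma (distribution functions min(C/s²,1) for s<0 and max(1-C/s²,0) for s>0, C > 0). Then every μ in the order interval [μ^Min, μ^Max] with respect to first order stochastic dominance has finite first moment: ∫ |y| dμ(y) < ∞. Moreover sup_{μ ∈ [μ^Min,μ^Max]} ∫ |y|^p dμ(y) < ∞ for every p ∈ (1,2). -/
open MeasureTheory Set
open scoped ENNReal

/-- Tail bound: any measure in the stochastic order interval has quadratically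
decaying tails. -/
lemma tail_bound_aux (C : ℝ) (hC : 0 < C)
    (μMin μMax : Measure ℝ) [IsProbabilityMeasure μMin] [IsProbabilityMeasure μMax]
    (hMin₁ : ∀ s < (0:ℝ), (μMin (Iic s)).toReal = min (C / s ^ 2) 1)
    (hMax₂ : ∀ s : ℝ, 0 < s → (μMax (Iic s)).toReal = max (1 - C / s ^ 2) 0)
    (μ : Measure ℝ) [IsProbabilityMeasure μ]
    (h1 : ∀ s : ℝ, μ (Iic s) ≤ μMin (Iic s))
    (h2 : ∀ s : ℝ, μMax (Iic s) ≤ μ (Iic s))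
    {t : ℝ} (ht : 0 < t) :
    μ {a : ℝ | t ≤ |a|} ≤ ENNReal.ofReal (5 * C / t ^ 2) := by
  have hset : {a : ℝ | t ≤ |a|} ⊆ Iic (-t) ∪ Ici t := by
    intro a ha
    have ha' : t ≤ |a| := ha
    rcases le_abs.mp ha' with h | h
    · exact Or.inr h
    · exact Or.inl (le_neg.mp h)
  have hmin : μMin (Iic (-t)) = ENNReal.ofReal (min (C / t ^ 2) 1) := by
    have h := hMin₁ (-t) (by linarith)
    rw [neg_sq] at h
    rw [← ENNReal.ofReal_toReal (measure_ne_top μMin _), h]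
  have hA : μ (Iic (-t)) ≤ ENNReal.ofReal (C / t ^ 2) := by
    refine (h1 (-t)).trans ?_
    rw [hmin]
    exact ENNReal.ofReal_le_ofReal (min_le_left _ _)
  have ht2 : 0 < t / 2 := by linarith
  have hMaxge : ENNReal.ofReal (1 - 4 * C / t ^ 2) ≤ μMax (Iic (t / 2)) := by
    rw [← ENNReal.ofReal_toReal (measure_ne_top μMax _), hMax₂ (t / 2) ht2]
    apply ENNReal.ofReal_le_ofReal
    have hdiv : C / (t / 2) ^ 2 = 4 * C / t ^ 2 := by
      field_simp
      ring
    rw [hdiv]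
    exact le_max_left _ _
  have hB : μ (Ici t) ≤ ENNReal.ofReal (4 * C / t ^ 2) := by
    have hIci : Ici t ⊆ Ioi (t / 2) := fun x hx => lt_of_lt_of_le (by linarith : t / 2 < t) hx
    calc μ (Ici t) ≤ μ (Ioi (t / 2)) := measure_mono hIci
      _ = 1 - μ (Iic (t / 2)) := by
          rw [← compl_Iic, measure_compl measurableSet_Iic (measure_ne_top μ _), measure_univ]
      _ ≤ 1 - μMax (Iic (t / 2)) := tsub_le_tsub_left (h2 (t / 2)) 1
      _ ≤ 1 - ENNReal.ofReal (1 - 4 * C / t ^ 2) := tsub_le_tsub_left hMaxge 1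
      _ ≤ ENNReal.ofReal (4 * C / t ^ 2) := by
          rw [tsub_le_iff_right]
          calc (1 : ℝ≥0∞)
              = ENNReal.ofReal (4 * C / t ^ 2 + (1 - 4 * C / t ^ 2)) := by
                rw [show 4 * C / t ^ 2 + (1 - 4 * C / t ^ 2) = 1 by ring, ENNReal.ofReal_one]
            _ ≤ _ := ENNReal.ofReal_add_le
  calc μ {a : ℝ | t ≤ |a|} ≤ μ (Iic (-t) ∪ Ici t) := measure_mono hset
    _ ≤ μ (Iic (-t)) + μ (Ici t) := measure_union_le _ _
    _ ≤ ENNReal.ofReal (C / t ^ 2) + ENNReal.ofReal (4 * C / t ^ 2) := add_le_add hA hB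
    _ = ENNReal.ofReal (5 * C / t ^ 2) := by
        rw [← ENNReal.ofReal_add (by positivity) (by positivity)]
        congr 1
        ring

/-- Key uniform bound on the `p`-th moment (as a lower Lebesgue integral). -/
lemma key_bound_aux (C : ℝ) (hC : 0 < C) (p : ℝ) (hp1 : 1 ≤ p) (hp2 : p < 2)
    (μMin μMax : Measure ℝ) [IsProbabilityMeasure μMin] [IsProbabilityMeasure μMax]
    (hMin₁ : ∀ s < (0:ℝ), (μMin (Iic s)).toReal = min (C / s ^ 2) 1)
    (hMax₂ : ∀ s : ℝ, 0 < s → (μMax (Iic s)).toReal = max (1 - C / s ^ 2) 0)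
    (μ : Measure ℝ) [IsProbabilityMeasure μ]
    (h1 : ∀ s : ℝ, μ (Iic s) ≤ μMin (Iic s))
    (h2 : ∀ s : ℝ, μMax (Iic s) ≤ μ (Iic s)) :
    ∫⁻ y, ENNReal.ofReal (|y| ^ p) ∂μ ≤
      ENNReal.ofReal p *
        (1 + ENNReal.ofReal (5 * C) * ∫⁻ t in Ioi (1:ℝ), ENNReal.ofReal (t ^ (p - 3))) := by
  have hp0 : 0 < p := by linarith
  rw [lintegral_rpow_eq_lintegral_meas_le_mul μ
    (Filter.Eventually.of_forall fun y => abs_nonneg y) measurable_abs.aemeasurable hp0]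
  refine mul_le_mul_right ?_ _
  rw [← Ioc_union_Ioi_eq_Ioi (zero_le_one (α := ℝ)),
    lintegral_union measurableSet_Ioi (Ioc_disjoint_Ioi le_rfl)]
  refine add_le_add ?_ ?_
  · calc ∫⁻ t in Ioc (0:ℝ) 1, μ {a : ℝ | t ≤ |a|} * ENNReal.ofReal (t ^ (p - 1))
        ≤ ∫⁻ _ in Ioc (0:ℝ) 1, 1 := by
          refine setLIntegral_mono' measurableSet_Ioc fun t htmem => ?_
          refine mul_le_one' (prob_le_one) ?_
          exact ENNReal.ofReal_le_one.mpr
            (Real.rpow_le_one htmem.1.le htmem.2 (by linarith))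
      _ = 1 := by simp [Real.volume_Ioc]
  · rw [show ENNReal.ofReal (5 * C) * ∫⁻ t in Ioi (1:ℝ), ENNReal.ofReal (t ^ (p - 3))
        = ∫⁻ t in Ioi (1:ℝ), ENNReal.ofReal (5 * C) * ENNReal.ofReal (t ^ (p - 3)) from
      (lintegral_const_mul' _ _ ENNReal.ofReal_ne_top).symm]
    refine setLIntegral_mono' measurableSet_Ioi fun t htmem => ?_
    have ht1 : (1:ℝ) < t := htmem
    have htpos : (0:ℝ) < t := lt_trans zero_lt_one ht1
    calc μ {a : ℝ | t ≤ |a|} * ENNReal.ofReal (t ^ (p - 1))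
        ≤ ENNReal.ofReal (5 * C / t ^ 2) * ENNReal.ofReal (t ^ (p - 1)) :=
          mul_le_mul_left
            (tail_bound_aux C hC μMin μMax hMin₁ hMax₂ μ h1 h2 htpos) _
      _ = ENNReal.ofReal (5 * C) * ENNReal.ofReal (t ^ (p - 3)) := by
          rw [← ENNReal.ofReal_mul (by positivity), ← ENNReal.ofReal_mul (by positivity)]
          congr 1
          have h2t : (t : ℝ) ^ (2:ℕ) = t ^ ((2:ℕ) : ℝ) := (Real.rpow_natCast t 2).symm
          rw [h2t, div_mul_eq_mul_div, mul_div_assoc, ← Real.rpow_sub htpos,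
            show p - 1 - ((2:ℕ):ℝ) = p - 3 by push_cast; ring]

lemma J_lt_top_aux (p : ℝ) (hp2 : p < 2) :
    ∫⁻ t in Ioi (1:ℝ), ENNReal.ofReal (t ^ (p - 3)) < ⊤ := by
  have hint : IntegrableOn (fun t : ℝ => t ^ (p - 3)) (Ioi 1) :=
    integrableOn_Ioi_rpow_of_lt (by linarith) zero_lt_one
  have hnn : 0 ≤ᵐ[volume.restrict (Ioi (1:ℝ))] fun t : ℝ => t ^ (p - 3) := by
    refine (ae_restrict_iff' measurableSet_Ioi).mpr
      (Filter.Eventually.of_forall fun t ht => ?_)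
    exact Real.rpow_nonneg (le_of_lt (lt_trans zero_lt_one ht)) _
  have := hint.2
  rwa [hasFiniteIntegral_iff_ofReal hnn] at this

/-- With `ψ(x) = x²` and the corresponding `μMin`, `μMax` (cdf's `min (C/s²) 1` for `s < 0`
and `max (1 - C/s²) 0` for `s > 0`), every measure in the order interval `[μMin, μMax]`
has a finite first moment, and the `p`-th moments are uniformly bounded for `p ∈ (1,2)`. -/
theorem moments_on_quadratic_interval (C : ℝ) (hC : 0 < C)
    (μMin μMax : Measure ℝ) [IsProbabilityMeasure μMin] [IsProbabilityMeasure μMax]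
    (hMin₁ : ∀ s < (0:ℝ), (μMin (Iic s)).toReal = min (C / s ^ 2) 1)
    (hMin₂ : ∀ s : ℝ, 0 ≤ s → μMin (Iic s) = 1)
    (hMax₁ : ∀ s : ℝ, s ≤ 0 → μMax (Iic s) = 0)
    (hMax₂ : ∀ s : ℝ, 0 < s → (μMax (Iic s)).toReal = max (1 - C / s ^ 2) 0) :
    (∀ μ : Measure ℝ, IsProbabilityMeasure μ →
      (∀ s : ℝ, μ (Iic s) ≤ μMin (Iic s)) →
      (∀ s : ℝ, μMax (Iic s) ≤ μ (Iic s)) →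
      Integrable (fun y : ℝ => |y|) μ) ∧
    (∀ p ∈ Ioo (1:ℝ) 2, ∃ B : ℝ,
      ∀ μ : Measure ℝ, IsProbabilityMeasure μ →
        (∀ s : ℝ, μ (Iic s) ≤ μMin (Iic s)) →
        (∀ s : ℝ, μMax (Iic s) ≤ μ (Iic s)) →
        Integrable (fun y : ℝ => |y| ^ p) μ ∧ ∫ y, |y| ^ p ∂μ ≤ B) := by
  constructor
  · intro μ hμ h1 h2
    have key := key_bound_aux C hC 1 le_rfl (by norm_num) μMin μMax hMin₁ hMax₂ μ h1 h2
    have hJ : ∫⁻ t in Ioi (1:ℝ), ENNReal.ofReal (t ^ ((1:ℝ) - 3)) < ⊤ :=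
      J_lt_top_aux 1 (by norm_num)
    have hfin : ∫⁻ y, ENNReal.ofReal (|y|) ∂μ < ⊤ := by
      calc ∫⁻ y, ENNReal.ofReal (|y|) ∂μ
          = ∫⁻ y, ENNReal.ofReal (|y| ^ (1:ℝ)) ∂μ := by simp [Real.rpow_one]
        _ ≤ _ := key
        _ < ⊤ := by
            apply ENNReal.mul_lt_top ENNReal.ofReal_lt_top
            exact ENNReal.add_lt_top.mpr
              ⟨ENNReal.one_lt_top, ENNReal.mul_lt_top ENNReal.ofReal_lt_top hJ⟩
    refine ⟨continuous_abs.aestronglyMeasurable, ?_⟩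
    rwa [hasFiniteIntegral_iff_ofReal (Filter.Eventually.of_forall fun y => abs_nonneg y)]
  · intro p hp
    set J := ∫⁻ t in Ioi (1:ℝ), ENNReal.ofReal (t ^ (p - 3)) with hJdef
    have hJ : J < ⊤ := J_lt_top_aux p hp.2
    refine ⟨(ENNReal.ofReal p * (1 + ENNReal.ofReal (5 * C) * J)).toReal, ?_⟩
    intro μ hμ h1 h2
    have key := key_bound_aux C hC p hp.1.le hp.2 μMin μMax hMin₁ hMax₂ μ h1 h2
    have hBnd_ne : ENNReal.ofReal p * (1 + ENNReal.ofReal (5 * C) * J) ≠ ⊤ := by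
      refine ENNReal.mul_ne_top ENNReal.ofReal_ne_top ?_
      exact ENNReal.add_ne_top.mpr
        ⟨ENNReal.one_ne_top, ENNReal.mul_ne_top ENNReal.ofReal_ne_top hJ.ne⟩
    have hnn : 0 ≤ᵐ[μ] fun y : ℝ => |y| ^ p :=
      Filter.Eventually.of_forall fun y => Real.rpow_nonneg (abs_nonneg y) p
    have hmeas : AEStronglyMeasurable (fun y : ℝ => |y| ^ p) μ :=
      (continuous_abs.rpow_const fun y => Or.inr (by linarith [hp.1])).aestronglyMeasurable
    have hint : Integrable (fun y : ℝ => |y| ^ p) μ := by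
      refine ⟨hmeas, ?_⟩
      rw [hasFiniteIntegral_iff_ofReal hnn]
      exact lt_of_le_of_lt key (lt_top_iff_ne_top.mpr hBnd_ne)
    refine ⟨hint, ?_⟩
    rw [integral_eq_lintegral_of_nonneg_ae hnn hmeas]
    exact ENNReal.toReal_mono hBnd_ne key
end

section
/- Let (μⁿ) be a sequence of Borel probability measures on ℝ that is nondecreasing with respect to first order stochastic dominance and bounded above by some ν ∈ 𝒫(ℝ). Then the pointwise infimum F(s) = inf_n F_{μⁿ}(s) of the distribution functions is the distribution function of a probability measure μ*, μ* is the least upper bound of {μⁿ} in (𝒫(ℝ), ≤ˢᵗ), and μⁿ converges weakly to μ*. -/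
open MeasureTheory Set Filter Topology ProbabilityTheory
open scoped ENNReal NNReal

/-- A sequence of probability measures on ℝ, nondecreasing for first order stochastic
dominance and bounded above, has a least upper bound `μ*`, whose cdf is the pointwise
infimum of the cdf's, and the sequence converges weakly to `μ*`. -/
theorem fosd_increasing_sequence_converges (μ : ℕ → Measure ℝ)
    (hprob : ∀ n, IsProbabilityMeasure (μ n))
    (hmono : ∀ m n : ℕ, m ≤ n → ∀ s : ℝ, (μ n) (Iic s) ≤ (μ m) (Iic s))
    (ν : Measure ℝ) (hν : IsProbabilityMeasure ν)
    (hbdd : ∀ n, ∀ s : ℝ, ν (Iic s) ≤ (μ n) (Iic s)) :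
    ∃ μs : Measure ℝ, IsProbabilityMeasure μs ∧
      -- the cdf of μ* is the pointwise infimum of the cdf's
      (∀ s : ℝ, (μs (Iic s)).toReal = ⨅ n : ℕ, ((μ n) (Iic s)).toReal) ∧
      -- μ* is an upper bound: μ n ≤ˢᵗ μ* for all n
      (∀ n, ∀ s : ℝ, μs (Iic s) ≤ (μ n) (Iic s)) ∧
      -- μ* is the least upper bound
      (∀ η : Measure ℝ, IsProbabilityMeasure η →
        (∀ n, ∀ s : ℝ, η (Iic s) ≤ (μ n) (Iic s)) →
        (∀ s : ℝ, η (Iic s) ≤ μs (Iic s))) ∧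
      -- weak convergence to μ*
      (∀ f : BoundedContinuousFunction ℝ ℝ,
        Tendsto (fun n => ∫ x, f x ∂(μ n)) atTop (𝓝 (∫ x, f x ∂μs))) := by
  have := hprob
  have := hν
  -- the pointwise infimum of the cdf's
  set F : ℝ → ℝ := fun s => ⨅ n, cdf (μ n) s with hF
  have hbddBelow : ∀ s : ℝ, BddBelow (Set.range fun n => cdf (μ n) s) := by
    intro s
    exact ⟨0, by rintro x ⟨n, rfl⟩; exact cdf_nonneg _ _⟩
  have hanti : ∀ s : ℝ, Antitone fun n => cdf (μ n) s := by
    intro s m n hmn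
    show cdf (μ n) s ≤ cdf (μ m) s
    rw [cdf_eq_real, cdf_eq_real, measureReal_def, measureReal_def]
    exact ENNReal.toReal_mono (measure_ne_top _ _) (hmono m n hmn s)
  have F_le : ∀ (n : ℕ) (s : ℝ), F s ≤ cdf (μ n) s := fun n s => ciInf_le (hbddBelow s) n
  have F_nonneg : ∀ s : ℝ, 0 ≤ F s := fun s => le_ciInf fun n => cdf_nonneg _ _
  have F_le_one : ∀ s : ℝ, F s ≤ 1 := fun s => (F_le 0 s).trans (cdf_le_one _ _)
  have hν_le : ∀ s : ℝ, cdf ν s ≤ F s := by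
    intro s
    refine le_ciInf fun n => ?_
    rw [cdf_eq_real, cdf_eq_real, measureReal_def, measureReal_def]
    exact ENNReal.toReal_mono (measure_ne_top _ _) (hbdd n s)
  have F_mono : Monotone F := by
    intro a b hab
    exact le_ciInf fun n => (F_le n a).trans (monotone_cdf _ hab)
  have htendF : ∀ s : ℝ, Tendsto (fun n => cdf (μ n) s) atTop (𝓝 (F s)) := fun s =>
    tendsto_atTop_ciInf (hanti s) (hbddBelow s)
  -- F is right continuous
  have F_rc : ∀ x : ℝ, ContinuousWithinAt F (Ici x) x := by
    intro x
    rw [Metric.continuousWithinAt_iff]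
    intro ε hε
    obtain ⟨n, hn⟩ : ∃ n, cdf (μ n) x < F x + ε / 2 := by
      refine exists_lt_of_ciInf_lt ?_
      exact lt_add_of_pos_right _ (half_pos hε)
    obtain ⟨δ, hδ, hδ'⟩ := Metric.continuousWithinAt_iff.mp ((cdf (μ n)).right_continuous x)
      (ε / 2) (half_pos hε)
    refine ⟨δ, hδ, fun {t} ht htd => ?_⟩
    have h1 : F x ≤ F t := F_mono ht
    have h2 : F t < F x + ε := by
      calc F t ≤ cdf (μ n) t := F_le n t
        _ < cdf (μ n) x + ε / 2 := by
            have := hδ' ht htd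
            rw [Real.dist_eq] at this
            linarith [abs_lt.mp this]
        _ < F x + ε := by linarith
    rw [Real.dist_eq]
    rw [abs_lt]
    constructor <;> linarith
  set SF : StieltjesFunction ℝ := ⟨F, F_mono, F_rc⟩ with hSF
  -- limits at ±∞
  have hbot : Tendsto SF atBot (𝓝 0) := by
    refine tendsto_of_tendsto_of_tendsto_of_le_of_le tendsto_const_nhds
      (tendsto_cdf_atBot (μ 0)) F_nonneg (F_le 0)
  have htop : Tendsto SF atTop (𝓝 1) := by
    refine tendsto_of_tendsto_of_tendsto_of_le_of_le (tendsto_cdf_atTop ν)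
      tendsto_const_nhds hν_le F_le_one
  set μs : Measure ℝ := SF.measure with hμs
  have hprobs : IsProbabilityMeasure μs := by
    constructor
    rw [SF.measure_univ hbot htop]
    simp
  have hIic : ∀ s : ℝ, μs (Iic s) = ENNReal.ofReal (F s) := by
    intro s
    rw [SF.measure_Iic hbot s, sub_zero]
  have hIicReal : ∀ s : ℝ, (μs (Iic s)).toReal = F s := by
    intro s
    rw [hIic s, ENNReal.toReal_ofReal (F_nonneg s)]
  refine ⟨μs, hprobs, ?_, ?_, ?_, ?_⟩
  · intro s
    rw [hIicReal s]
    exact iInf_congr fun n => by rw [cdf_eq_real, measureReal_def]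
  · intro n s
    rw [hIic s, ← ofReal_cdf (μ n) s]
    exact ENNReal.ofReal_le_ofReal (F_le n s)
  · intro η hη hle s
    rw [hIic s, ← ofReal_cdf η s]
    refine ENNReal.ofReal_le_ofReal (le_ciInf fun n => ?_)
    rw [cdf_eq_real, cdf_eq_real, measureReal_def, measureReal_def]
    exact ENNReal.toReal_mono (measure_ne_top _ _) (hle n s)
  -- weak convergence
  · -- convergence of measures of Ioc intervals
    have hIocReal : ∀ (m : Measure ℝ), IsProbabilityMeasure m → ∀ a b : ℝ, a ≤ b →
        (m (Ioc a b)).toReal = (m (Iic b)).toReal - (m (Iic a)).toReal := by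
      intro m hm a b hab
      have hsub : Ioc a b = Iic b \ Iic a := by
        ext x; simp [mem_Ioc, and_comm]
      rw [hsub, measure_diff (Iic_subset_Iic.mpr hab) measurableSet_Iic.nullMeasurableSet
        (measure_ne_top _ _),
        ENNReal.toReal_sub_of_le (measure_mono (Iic_subset_Iic.mpr hab)) (measure_ne_top _ _)]
    have htendIoc : ∀ a b : ℝ,
        Tendsto (fun n => (μ n (Ioc a b)).toReal) atTop (𝓝 ((μs (Ioc a b)).toReal)) := by
      intro a b
      rcases le_or_gt a b with hab | hab
      · have h1 : ∀ n, (μ n (Ioc a b)).toReal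
            = (μ n (Iic b)).toReal - (μ n (Iic a)).toReal :=
          fun n => hIocReal (μ n) (hprob n) a b hab
        have h2 : (μs (Ioc a b)).toReal = F b - F a := by
          rw [hIocReal μs hprobs a b hab, hIicReal, hIicReal]
        simp_rw [h1, h2]
        have := (htendF b).sub (htendF a)
        refine this.congr fun n => ?_
        rw [cdf_eq_real, cdf_eq_real, measureReal_def, measureReal_def]
      · simp [Set.Ioc_eq_empty (not_lt.mpr hab.le)]
    -- convergence for finite unions of Ioc intervals
    have hmeasU : ∀ l : List (ℝ × ℝ), MeasurableSet (⋃ p ∈ l, Ioc p.1 p.2) := by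
      intro l
      exact MeasurableSet.biUnion (List.finite_toSet l).countable
        fun p _ => measurableSet_Ioc
    have hunion3 : ∀ (m : Measure ℝ), IsProbabilityMeasure m → ∀ (X Y : Set ℝ),
        MeasurableSet Y →
        (m (X ∪ Y)).toReal = (m X).toReal + (m Y).toReal - (m (X ∩ Y)).toReal := by
      intro m hm X Y hY
      have h := measure_union_add_inter (μ := m) X hY
      have h' := congrArg ENNReal.toReal h
      rw [ENNReal.toReal_add (measure_ne_top _ _) (measure_ne_top _ _),
        ENNReal.toReal_add (measure_ne_top _ _) (measure_ne_top _ _)] at h'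
      linarith
    have hUnion : ∀ (k : ℕ) (l : List (ℝ × ℝ)), l.length ≤ k →
        Tendsto (fun n => (μ n (⋃ p ∈ l, Ioc p.1 p.2)).toReal) atTop
          (𝓝 ((μs (⋃ p ∈ l, Ioc p.1 p.2)).toReal)) := by
      intro k
      induction k with
      | zero =>
        intro l hl
        have : l = [] := List.length_eq_zero_iff.mp (Nat.le_zero.mp hl)
        subst this
        simp
      | succ k ih =>
        intro l hl
        match l with
        | [] => simp
        | p :: t =>
          have hset : (⋃ q ∈ p :: t, Ioc q.1 q.2)
              = (⋃ q ∈ t, Ioc q.1 q.2) ∪ Ioc p.1 p.2 := by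
            ext x
            simp only [mem_iUnion, List.mem_cons, mem_union, exists_prop]
            constructor
            · rintro ⟨q, (rfl | hq), hx⟩
              · exact Or.inr hx
              · exact Or.inl ⟨q, hq, hx⟩
            · rintro (⟨q, hq, hx⟩ | hx)
              · exact ⟨q, Or.inr hq, hx⟩
              · exact ⟨p, Or.inl rfl, hx⟩
          have hintset : (⋃ q ∈ t, Ioc q.1 q.2) ∩ Ioc p.1 p.2
              = ⋃ q ∈ t.map (fun q : ℝ × ℝ => (p.1 ⊔ q.1, p.2 ⊓ q.2)), Ioc q.1 q.2 := by
            ext x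
            simp only [mem_inter_iff, mem_iUnion, List.mem_map, exists_prop]
            constructor
            · rintro ⟨⟨q, hq, hx⟩, hxp⟩
              refine ⟨(p.1 ⊔ q.1, p.2 ⊓ q.2), ⟨q, hq, rfl⟩, ?_⟩
              show x ∈ Ioc (p.1 ⊔ q.1) (p.2 ⊓ q.2)
              rw [← Set.Ioc_inter_Ioc]
              exact ⟨hxp, hx⟩
            · rintro ⟨r, ⟨q, hq, rfl⟩, hx⟩
              have hx' : x ∈ Ioc (p.1 ⊔ q.1) (p.2 ⊓ q.2) := hx
              rw [← Set.Ioc_inter_Ioc] at hx'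
              exact ⟨⟨q, hq, hx'.2⟩, hx'.1⟩
          have ht : t.length ≤ k := by
            simpa using Nat.succ_le_succ_iff.mp (by simpa using hl)
          have htm : (t.map (fun q : ℝ × ℝ => (p.1 ⊔ q.1, p.2 ⊓ q.2))).length ≤ k := by
            simpa using ht
          have h1 := ih t ht
          have h2 := htendIoc p.1 p.2
          have h3' := ih _ htm
          rw [← hintset] at h3'
          have key : ∀ (m : Measure ℝ), IsProbabilityMeasure m →
              (m (⋃ q ∈ p :: t, Ioc q.1 q.2)).toReal
              = (m (⋃ q ∈ t, Ioc q.1 q.2)).toReal + (m (Ioc p.1 p.2)).toReal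
                - (m ((⋃ q ∈ t, Ioc q.1 q.2) ∩ Ioc p.1 p.2)).toReal := by
            intro m hm
            rw [hset]
            exact hunion3 m hm _ _ measurableSet_Ioc
          simp_rw [key _ hprobs, fun n => key (μ n) (hprob n)]
          exact (h1.add h2).sub h3'
    -- liminf bound for open sets, in ℝ≥0∞
    have hopen : ∀ G : Set ℝ, IsOpen G → μs G ≤ atTop.liminf fun n => μ n G := by
      intro G hG
      rcases eq_empty_or_nonempty G with rfl | hGne
      · simp
      · -- rational Ioc intervals inside G covering G
        set P : Set (ℚ × ℚ) := {p | Icc (p.1 : ℝ) (p.2 : ℝ) ⊆ G} with hP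
        have hcover : ∀ x ∈ G, ∃ p : ℚ × ℚ, p ∈ P ∧ x ∈ Ioc (p.1 : ℝ) (p.2 : ℝ) := by
          intro x hx
          obtain ⟨ε, hε, hball⟩ := Metric.isOpen_iff.mp hG x hx
          obtain ⟨q, hq1, hq2⟩ := exists_rat_btwn (show x - ε < x by linarith)
          obtain ⟨r, hr1, hr2⟩ := exists_rat_btwn (show x < x + ε by linarith)
          refine ⟨(q, r), ?_, hq2, hr1.le⟩
          intro y hy
          apply hball
          rw [Real.ball_eq_Ioo]
          exact ⟨lt_of_lt_of_le hq1 hy.1, lt_of_le_of_lt hy.2 hr2⟩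
        have hPne : P.Nonempty := by
          obtain ⟨x, hx⟩ := hGne
          obtain ⟨p, hp, _⟩ := hcover x hx
          exact ⟨p, hp⟩
        obtain ⟨f, hf⟩ := (Set.to_countable P).exists_eq_range hPne
        set A : ℕ → Set ℝ := fun k => Ioc ((f k).1 : ℝ) ((f k).2 : ℝ) with hA
        have hGA : G = ⋃ k, A k := by
          ext x
          simp only [mem_iUnion]
          constructor
          · intro hx
            obtain ⟨p, hp, hxp⟩ := hcover x hx
            rw [hf] at hp
            obtain ⟨k, rfl⟩ := hp
            exact ⟨k, hxp⟩
          · rintro ⟨k, hk⟩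
            have hk' : f k ∈ P := by rw [hf]; exact ⟨k, rfl⟩
            exact hk' (Ioc_subset_Icc_self hk)
        -- each accumulated union is a finite union of Ioc's
        have hacc : ∀ k : ℕ, accumulate A k
            = ⋃ p ∈ (List.range (k + 1)).map (fun i => (((f i).1 : ℝ), ((f i).2 : ℝ))),
                Ioc p.1 p.2 := by
          intro k
          ext x
          simp only [Set.mem_accumulate, mem_iUnion, List.mem_map, List.mem_range, exists_prop]
          constructor
          · rintro ⟨i, hi, hx⟩
            exact ⟨(((f i).1 : ℝ), ((f i).2 : ℝ)), ⟨i, Nat.lt_succ_of_le hi, rfl⟩, hx⟩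
          · rintro ⟨p, ⟨i, hi, rfl⟩, hx⟩
            exact ⟨i, Nat.lt_succ_iff.mp hi, hx⟩
        have haccle : ∀ k : ℕ, μs (accumulate A k) ≤ atTop.liminf fun n => μ n G := by
          intro k
          have htend : Tendsto (fun n => (μ n (accumulate A k)).toReal) atTop
              (𝓝 ((μs (accumulate A k)).toReal)) := by
            rw [hacc k]
            exact hUnion _ _ le_rfl
          have htend' : Tendsto (fun n => μ n (accumulate A k)) atTop
              (𝓝 (μs (accumulate A k))) := by
            have := (ENNReal.continuous_ofReal.tendsto _).comp htend
            simpa only [Function.comp_def, ENNReal.ofReal_toReal (measure_ne_top _ _)]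
              using this
          calc μs (accumulate A k) = atTop.liminf fun n => μ n (accumulate A k) :=
                htend'.liminf_eq.symm
            _ ≤ atTop.liminf fun n => μ n G := by
                refine liminf_le_liminf (Eventually.of_forall fun n => ?_)
                refine measure_mono ?_
                rw [hGA]
                exact Set.accumulate_subset_iUnion _
        rw [hGA]
        refine le_of_tendsto' (tendsto_measure_iUnion_accumulate (μ := μs) (f := A)) fun k => ?_
        rw [← hGA]
        exact haccle k
    -- conclude weak convergence via portmanteau
    set μP : ℕ → ProbabilityMeasure ℝ := fun n => ⟨μ n, hprob n⟩ with hμP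
    set μsP : ProbabilityMeasure ℝ := ⟨μs, hprobs⟩ with hμsP
    have htendP : Tendsto μP atTop (𝓝 μsP) := by
      refine tendsto_of_forall_isOpen_le_liminf fun G hG => ?_
      have key := hopen G hG
      rw [← ENNReal.coe_le_coe]
      have aux : (↑(atTop.liminf fun i => μP i G) : ℝ≥0∞)
          = atTop.liminf fun i => ((μP i G : ℝ≥0∞)) := by
        refine Monotone.map_liminf_of_continuousAt (F := atTop) ENNReal.coe_mono (fun i => μP i G)
          ENNReal.continuous_coe.continuousAt ?_ ⟨0, by simp⟩
        refine Filter.IsBoundedUnder.isCoboundedUnder_ge ⟨1, ?_⟩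
        simp only [eventually_map, Filter.eventually_atTop]
        exact ⟨0, fun n _ => ProbabilityMeasure.apply_le_one _ _⟩
      rw [aux]
      simp only [ProbabilityMeasure.ennreal_coeFn_eq_coeFn_toMeasure]
      exact key
    intro g
    exact ProbabilityMeasure.tendsto_iff_forall_integral_tendsto.mp htendP g
end

section
/- Let (μⁿ) be a sequence of Borel probability measures on ℝ that is nonincreasing with respect to first order stochastic dominance and bounded below. Let G be the pointwise supremum of the distribution functions F_{μⁿ} and let G* be its right-continuous (upper semicontinuous) envelope, G*(s) = inf_{δ>0} G(s+δ). Then G* is the distribution function of a probability measure μ*, μ* is the greatest lower bound of {μⁿ} in (𝒫(ℝ), ≤ˢᵗ), and μⁿ converges weakly to μ*. -/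
open MeasureTheory Set Filter Topology

private lemma fosd_aux_step (u : ℕ → ℝ) (x : ℝ) : ∀ m : ℕ, u 0 < x → x ≤ u m →
    ∃ k < m, u k < x ∧ x ≤ u (k + 1) := by
  intro m
  induction m with
  | zero => intro h1 h2; exact absurd h2 (not_le.2 h1)
  | succ m ih =>
    intro h1 h2
    by_cases h : x ≤ u m
    · obtain ⟨k, hk, h3⟩ := ih h1 h
      exact ⟨k, hk.trans (Nat.lt_succ_self m), h3⟩
    · exact ⟨m, Nat.lt_succ_self m, lt_of_not_ge h, h2⟩


/-- A sequence of probability measures on ℝ, nonincreasing for first order stochastic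
dominance and bounded below, has a greatest lower bound `μ*`, whose cdf is the
right-continuous (usc) envelope of the pointwise supremum of the cdf's, and the sequence
converges weakly to `μ*`. -/
theorem fosd_decreasing_sequence_converges (μ : ℕ → Measure ℝ)
    (hprob : ∀ n, IsProbabilityMeasure (μ n))
    (hmono : ∀ m n : ℕ, m ≤ n → ∀ s : ℝ, (μ m) (Iic s) ≤ (μ n) (Iic s))
    (η₀ : Measure ℝ) (hη₀ : IsProbabilityMeasure η₀)
    (hbdd : ∀ n, ∀ s : ℝ, (μ n) (Iic s) ≤ η₀ (Iic s)) :
    ∃ μs : Measure ℝ, IsProbabilityMeasure μs ∧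
      -- the cdf of μ* is the usc envelope G* of the pointwise supremum G of the cdf's
      (∀ s : ℝ, (μs (Iic s)).toReal
          = ⨅ δ : {d : ℝ // 0 < d}, ⨆ n : ℕ, ((μ n) (Iic (s + δ.1))).toReal) ∧
      -- μ* is a lower bound: μ* ≤ˢᵗ μ n for all n
      (∀ n, ∀ s : ℝ, (μ n) (Iic s) ≤ μs (Iic s)) ∧
      -- μ* is the greatest lower bound
      (∀ η : Measure ℝ, IsProbabilityMeasure η →
        (∀ n, ∀ s : ℝ, (μ n) (Iic s) ≤ η (Iic s)) →
        (∀ s : ℝ, μs (Iic s) ≤ η (Iic s))) ∧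
      -- weak convergence to μ*
      (∀ f : BoundedContinuousFunction ℝ ℝ,
        Tendsto (fun n => ∫ x, f x ∂(μ n)) atTop (𝓝 (∫ x, f x ∂μs))) := by
  classical
  -- the cdfs
  set F : ℕ → ℝ → ℝ := fun n s => ((μ n) (Iic s)).toReal with hF
  have hF0 : ∀ n s, 0 ≤ F n s := fun n s => ENNReal.toReal_nonneg
  have hF1 : ∀ n s, F n s ≤ 1 := by
    intro n s
    have := hprob n
    have h := measure_mono (subset_univ (Iic s)) (μ := μ n)
    rw [measure_univ] at h
    simpa [hF] using ENNReal.toReal_mono (by simp) h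
  have hFs : ∀ n, Monotone (F n) := by
    intro n a b hab
    exact ENNReal.toReal_mono (measure_ne_top _ _) (measure_mono (Iic_subset_Iic.2 hab))
  have hFn : ∀ s, Monotone (fun n => F n s) := by
    intro s a b hab
    exact ENNReal.toReal_mono (measure_ne_top _ _) (hmono a b hab s)
  have hFof : ∀ n s, (μ n) (Iic s) = ENNReal.ofReal (F n s) := fun n s =>
    (ENNReal.ofReal_toReal (measure_ne_top _ _)).symm
  -- the sup of the cdfs
  set G : ℝ → ℝ := fun s => ⨆ n, F n s with hG
  have hbddG : ∀ s, BddAbove (range fun n => F n s) := by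
    intro s; exact ⟨1, by rintro x ⟨n, rfl⟩; exact hF1 n s⟩
  have hGmono : Monotone G := by
    intro a b hab
    exact ciSup_le fun n => (hFs n hab).trans (le_ciSup (hbddG b) n)
  have hFG : ∀ n s, F n s ≤ G s := fun n s => le_ciSup (hbddG s) n
  have hG1 : ∀ s, G s ≤ 1 := fun s => ciSup_le fun n => hF1 n s
  have hG0 : ∀ s, 0 ≤ G s := fun s => (hF0 0 s).trans (hFG 0 s)
  have hGtendsto : ∀ s, Tendsto (fun n => F n s) atTop (𝓝 (G s)) := fun s =>
    tendsto_atTop_ciSup (hFn s) (hbddG s)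
  -- the usc envelope as a Stieltjes function
  set Gs : StieltjesFunction ℝ := hGmono.stieltjesFunction with hGs
  have hGsval : ∀ s, Gs s = Function.rightLim G s := hGmono.stieltjesFunction_eq
  have hGGs : ∀ s, G s ≤ Gs s := by
    intro s; rw [hGsval]; exact hGmono.le_rightLim le_rfl
  have hGsG : ∀ a b : ℝ, a < b → Gs a ≤ G b := by
    intro a b hab; rw [hGsval]; exact hGmono.rightLim_le hab
  have hGs0 : ∀ s, 0 ≤ Gs s := fun s => (hG0 s).trans (hGGs s)
  have hGs1 : ∀ s, Gs s ≤ 1 := fun s => (hGsG s (s+1) (by linarith)).trans (hG1 _)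
  -- limits at ±∞
  have hGsbot : Tendsto (fun x => Gs x) atBot (𝓝 0) := by
    have hiic : (⋂ x : ℝ, Iic x) = (∅ : Set ℝ) := by
      ext y
      simp only [mem_iInter, mem_Iic, mem_empty_iff_false, iff_false, not_forall, not_le]
      exact ⟨y - 1, by linarith⟩
    have h1 : Tendsto (fun x : ℝ => η₀ (Iic x)) atBot (𝓝 0) := by
      have := tendsto_measure_iInter_atBot (μ := η₀) (s := fun x : ℝ => Iic x)
        (fun i => measurableSet_Iic.nullMeasurableSet)
        (fun a b hab => Iic_subset_Iic.2 hab) ⟨0, measure_ne_top _ _⟩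
      rw [hiic] at this
      simpa [Function.comp_def] using this
    have h2 : Tendsto (fun x : ℝ => (η₀ (Iic (x + 1))).toReal) atBot (𝓝 0) := by
      have h3 := h1.comp (tendsto_atBot_add_const_right atBot 1 tendsto_id)
      have := (ENNReal.tendsto_toReal (by simp)).comp h3
      simpa [Function.comp_def] using this
    refine tendsto_of_tendsto_of_tendsto_of_le_of_le tendsto_const_nhds h2 (fun x => hGs0 x) ?_
    intro x
    refine (hGsG x (x + 1) (by linarith)).trans (ciSup_le fun n => ?_)
    exact ENNReal.toReal_mono (measure_ne_top _ _) (hbdd n (x + 1))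
  have hGstop : Tendsto (fun x => Gs x) atTop (𝓝 1) := by
    have h1 : Tendsto (fun x : ℝ => F 0 x) atTop (𝓝 1) := by
      have := (ENNReal.tendsto_toReal (a := (μ 0) univ)
        (by simp [(hprob 0).measure_univ])).comp (tendsto_measure_Iic_atTop (μ 0))
      simpa [hF, (hprob 0).measure_univ, Function.comp_def] using this
    exact tendsto_of_tendsto_of_tendsto_of_le_of_le h1 tendsto_const_nhds
      (fun x => (hFG 0 x).trans (hGGs x)) hGs1
  have hprobGs : IsProbabilityMeasure Gs.measure := Gs.isProbabilityMeasure hGsbot hGstop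
  have hIic : ∀ s, Gs.measure (Iic s) = ENNReal.ofReal (Gs s) := by
    intro s
    rw [Gs.measure_Iic hGsbot s, sub_zero]
  -- the iInf formula for Gs
  have hGsinf : ∀ s, Gs s = ⨅ δ : {d : ℝ // 0 < d}, G (s + δ.1) := by
    intro s
    rw [hGsval, hGmono.rightLim_eq_sInf]
    rw [iInf]
    congr 1
    ext y
    constructor
    · rintro ⟨x, hx, rfl⟩
      exact ⟨⟨x - s, sub_pos.2 hx⟩, congrArg G (by ring)⟩
    · rintro ⟨⟨d, hd⟩, rfl⟩
      exact ⟨s + d, by simpa using hd, rfl⟩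
  -- convergence of cdfs at continuity points
  have hcont : ∀ t : ℝ, ContinuousAt Gs t → G t = Gs t := by
    intro t ht
    refine le_antisymm (hGGs t) ?_
    have h1 : Tendsto (fun y => Gs y) (𝓝[<] t) (𝓝 (Gs t)) :=
      (ht.tendsto).mono_left nhdsWithin_le_nhds
    refine le_of_tendsto h1 ?_
    filter_upwards [self_mem_nhdsWithin] with y hy
    exact hGsG y t hy
  have hIicTendsto : ∀ t : ℝ, ContinuousAt Gs t →
      Tendsto (fun n => (μ n) (Iic t)) atTop (𝓝 (ENNReal.ofReal (Gs t))) := by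
    intro t ht
    have := (hGtendsto t)
    rw [hcont t ht] at this
    simp_rw [hFof]
    exact ENNReal.tendsto_ofReal this
  -- key liminf bound for open sets
  have hD : Dense {x : ℝ | ContinuousAt Gs x} := by
    have h1 := (Gs.mono.countable_not_continuousAt (β := ℝ)).dense_compl ℝ
    have h2 : {x : ℝ | ¬ContinuousAt (⇑Gs) x}ᶜ = {x : ℝ | ContinuousAt (⇑Gs) x} := by
      ext x; simp
    rwa [h2] at h1
  have hopen : ∀ U : Set ℝ, IsOpen U →
      Gs.measure U ≤ atTop.liminf (fun n => (μ n) U) := by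
    intro U hU
    refine ENNReal.le_of_forall_pos_le_add fun ε hε _ => ?_
    obtain ⟨K, hKU, hK, hμK⟩ := hU.measurableSet.exists_isCompact_lt_add
      (μ := Gs.measure) (measure_ne_top _ _) (ε := ε) (by exact_mod_cast hε.ne')
    have key : Gs.measure K ≤ atTop.liminf (fun n => (μ n) U) := by
      obtain ⟨δ, hδpos, hδ⟩ := hK.exists_thickening_subset_open hU hKU
      set δ' : ℝ := min δ 1 with hδ'def
      have hδ'pos : 0 < δ' := lt_min hδpos one_pos
      have hδ'le : δ' ≤ 1 := min_le_right _ _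
      have hδ'U : Metric.thickening δ' K ⊆ U :=
        (Metric.thickening_mono (min_le_left _ _) K).trans hδ
      obtain ⟨M, hM⟩ := hK.isBounded.subset_closedBall 0
      set h : ℝ := δ' / 4 with hhdef
      have hhpos : 0 < h := by positivity
      set c : ℝ := -M - 1 with hcdef
      set m : ℕ := ⌈(2 * M + 1) / h⌉₊ with hmdef
      have hpick : ∀ k : ℕ, ∃ x : ℝ, ContinuousAt Gs x ∧
          x ∈ Ioo (c + k * h) (c + k * h + h / 2) := by
        intro k
        have hne : (Ioo (c + k * h) (c + k * h + h / 2)).Nonempty :=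
          nonempty_Ioo.2 (by linarith)
        obtain ⟨x, hx1, hx2⟩ := hD.exists_mem_open isOpen_Ioo hne
        exact ⟨x, hx1, hx2⟩
      choose t htc htm using hpick
      have htlt : ∀ k : ℕ, t k < t (k + 1) := by
        intro k
        have h1 := (htm k).2
        have h2 := (htm (k + 1)).1
        push_cast at h1 h2 ⊢
        nlinarith
      have htmono : StrictMono t := strictMono_nat_of_lt_succ htlt
      have hgap : ∀ k : ℕ, t (k + 1) - t k < δ' := by
        intro k
        have h1 := (htm k).1
        have h2 := (htm (k + 1)).2
        push_cast at h1 h2 ⊢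
        nlinarith
      have ht0 : t 0 < -M := by
        have h1 := (htm 0).2
        push_cast at h1
        simp only [hcdef] at h1
        nlinarith
      have htm' : M ≤ t m := by
        have h1 : (2 * M + 1) / h ≤ (m : ℝ) := Nat.le_ceil _
        have h2 : 2 * M + 1 ≤ (m : ℝ) * h := (div_le_iff₀ hhpos).1 h1
        have h3 := (htm m).1
        nlinarith
      set J := (Finset.range m).filter
        (fun k => (Ioc (t k) (t (k + 1)) ∩ K).Nonempty) with hJdef
      have hcover : K ⊆ ⋃ k ∈ J, Ioc (t k) (t (k + 1)) := by
        intro x hx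
        have hx' : x ∈ Icc (0 - M) (0 + M) := by
          rw [← Real.closedBall_eq_Icc]; exact hM hx
        obtain ⟨hx1, hx2⟩ := hx'
        obtain ⟨k, hkm, hk1, hk2⟩ := fosd_aux_step t x m
          (ht0.trans_le (by linarith)) (le_trans (by linarith) htm')
        refine mem_biUnion ?_ ⟨hk1, hk2⟩
        exact Finset.mem_filter.2 ⟨Finset.mem_range.2 hkm, ⟨x, ⟨hk1, hk2⟩, hx⟩⟩
      have hsubU : ∀ k ∈ J, Ioc (t k) (t (k + 1)) ⊆ U := by
        intro k hk x hx
        obtain ⟨y, hy, hyK⟩ := (Finset.mem_filter.1 hk).2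
        apply hδ'U
        rw [Metric.mem_thickening_iff]
        refine ⟨y, hyK, ?_⟩
        rw [Real.dist_eq]
        have hg := hgap k
        obtain ⟨hx1, hx2⟩ := hx
        obtain ⟨hy1, hy2⟩ := hy
        rw [abs_lt]
        constructor <;> linarith
      have hdisj : (↑J : Set ℕ).PairwiseDisjoint
          (fun k => Ioc (t k) (t (k + 1))) := by
        intro a _ b _ hab
        rcases hab.lt_or_gt with hlt | hlt
        · refine Ioc_disjoint_Ioc.2 ?_
          have : t (a + 1) ≤ t b := htmono.monotone (by omega)
          exact le_trans (min_le_left _ _) (le_trans this (le_max_right _ _))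
        · refine Ioc_disjoint_Ioc.2 ?_
          have : t (b + 1) ≤ t a := htmono.monotone (by omega)
          exact le_trans (min_le_right _ _) (le_trans this (le_max_left _ _))
      have hIocT : ∀ k : ℕ, Tendsto (fun n => (μ n) (Ioc (t k) (t (k + 1)))) atTop
          (𝓝 (Gs.measure (Ioc (t k) (t (k + 1))))) := by
        intro k
        have hab := (htlt k).le
        have e1 : ∀ n, (μ n) (Ioc (t k) (t (k + 1)))
            = (μ n) (Iic (t (k + 1))) - (μ n) (Iic (t k)) := by
          intro n
          rw [← Iic_sdiff_Iic, measure_diff (Iic_subset_Iic.2 hab)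
            measurableSet_Iic.nullMeasurableSet (measure_ne_top _ _)]
        simp_rw [e1]
        have h2 := ENNReal.Tendsto.sub (hIicTendsto _ (htc (k + 1)))
          (hIicTendsto _ (htc k)) (Or.inl ENNReal.ofReal_ne_top)
        have e2 : ENNReal.ofReal (Gs (t (k + 1))) - ENNReal.ofReal (Gs (t k))
            = Gs.measure (Ioc (t k) (t (k + 1))) := by
          rw [Gs.measure_Ioc, ENNReal.ofReal_sub _ (hGs0 _)]
        rwa [e2] at h2
      have hsumT : Tendsto (fun n => ∑ k ∈ J, (μ n) (Ioc (t k) (t (k + 1)))) atTop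
          (𝓝 (∑ k ∈ J, Gs.measure (Ioc (t k) (t (k + 1))))) :=
        tendsto_finset_sum _ (fun k _ => hIocT k)
      have hKle : Gs.measure K ≤ ∑ k ∈ J, Gs.measure (Ioc (t k) (t (k + 1))) :=
        (measure_mono hcover).trans (measure_biUnion_finset_le _ _)
      have hle : ∀ n, ∑ k ∈ J, (μ n) (Ioc (t k) (t (k + 1))) ≤ (μ n) U := by
        intro n
        rw [← measure_biUnion_finset hdisj (fun k _ => measurableSet_Ioc)]
        exact measure_mono (iUnion₂_subset hsubU)
      calc Gs.measure K ≤ ∑ k ∈ J, Gs.measure (Ioc (t k) (t (k + 1))) := hKle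
        _ = atTop.liminf (fun n => ∑ k ∈ J, (μ n) (Ioc (t k) (t (k + 1)))) :=
            hsumT.liminf_eq.symm
        _ ≤ atTop.liminf (fun n => (μ n) U) := liminf_le_liminf (.of_forall hle)
    calc Gs.measure U ≤ Gs.measure K + ε := hμK.le
      _ ≤ atTop.liminf (fun n => (μ n) U) + ε := add_le_add_left key _
  refine ⟨Gs.measure, hprobGs, ?_, ?_, ?_, ?_⟩
  · -- cdf formula
    intro s
    rw [hIic s, ENNReal.toReal_ofReal (hGs0 s), hGsinf s]
  · -- lower bound
    intro n s
    rw [hIic s, hFof n s]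
    exact ENNReal.ofReal_le_ofReal ((hFG n s).trans (hGGs s))
  · -- greatest lower bound
    intro η hη hle s
    rw [hIic s]
    have hkey : ∀ k : ℕ, ENNReal.ofReal (Gs s) ≤ η (Iic (s + 1 / (k + 1))) := by
      intro k
      have hd : (0:ℝ) < 1 / (k + 1) := by positivity
      have h1 : Gs s ≤ G (s + 1 / (k + 1)) := hGsG _ _ (by linarith)
      have h2 : G (s + 1 / (k + 1)) ≤ (η (Iic (s + 1 / (k + 1)))).toReal :=
        ciSup_le fun n => ENNReal.toReal_mono (measure_ne_top _ _) (hle n _)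
      calc ENNReal.ofReal (Gs s) ≤ ENNReal.ofReal ((η (Iic (s + 1 / (k + 1)))).toReal) :=
            ENNReal.ofReal_le_ofReal (h1.trans h2)
        _ = η (Iic (s + 1 / (k + 1))) := ENNReal.ofReal_toReal (measure_ne_top _ _)
    have hiic : (⋂ k : ℕ, Iic (s + 1 / (k + 1))) = Iic s := by
      ext y
      simp only [mem_iInter, mem_Iic]
      constructor
      · intro h
        have hlim : Tendsto (fun k : ℕ => s + 1 / ((k:ℝ) + 1)) atTop (𝓝 (s + 0)) :=
          tendsto_const_nhds.add tendsto_one_div_add_atTop_nhds_zero_nat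
        rw [add_zero] at hlim
        exact ge_of_tendsto' hlim h
      · intro h k
        have : (0:ℝ) < 1 / ((k:ℝ) + 1) := by positivity
        linarith
    have hanti : Antitone (fun k : ℕ => Iic (s + 1 / ((k:ℝ) + 1))) := by
      intro a b hab
      refine Iic_subset_Iic.2 (by
        have : 1 / ((b:ℝ) + 1) ≤ 1 / ((a:ℝ) + 1) := by
          apply one_div_le_one_div_of_le (by positivity)
          exact_mod_cast by omega
        linarith)
    have := hanti.measure_iInter (μ := η) (fun k => measurableSet_Iic.nullMeasurableSet)
      ⟨0, measure_ne_top _ _⟩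
    rw [hiic] at this
    rw [this]
    exact le_iInf hkey
  · -- weak convergence
    intro f
    set P : ℕ → ProbabilityMeasure ℝ := fun n => ⟨μ n, hprob n⟩ with hP
    set Ps : ProbabilityMeasure ℝ := ⟨Gs.measure, hprobGs⟩ with hPs
    have hT : Tendsto P atTop (𝓝 Ps) := by
      apply MeasureTheory.tendsto_of_forall_isOpen_le_liminf
      intro U hU
      have h1 := hopen U hU
      have aux : ENNReal.ofNNReal (liminf (fun i => P i U) atTop)
          = liminf (ENNReal.ofNNReal ∘ fun i => P i U) atTop := by
        refine Monotone.map_liminf_of_continuousAt (F := atTop) ENNReal.coe_mono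
          (fun i => P i U) ?_ ?_ ?_
        · exact ENNReal.continuous_coe.continuousAt
        · exact IsBoundedUnder.isCoboundedUnder_ge ⟨1, by simp⟩
        · exact ⟨0, by simp⟩
      refine ENNReal.coe_le_coe.mp ?_
      rw [aux]
      have e1 : (ENNReal.ofNNReal ∘ fun i => P i U) = fun i => (μ i) U := by
        funext i
        exact ProbabilityMeasure.ennreal_coeFn_eq_coeFn_toMeasure _ _
      have e2 : (ENNReal.ofNNReal (Ps U)) = Gs.measure U :=
        ProbabilityMeasure.ennreal_coeFn_eq_coeFn_toMeasure _ _
      rw [e1, e2]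
      exact h1
    exact ProbabilityMeasure.tendsto_iff_forall_integral_tendsto.mp hT f
end

section
/- The binary lattice operations on 𝒫(ℝ) induced by first order stochastic dominance are jointly continuous with respect to weak convergence: if μⁿ → μ and νⁿ → ν weakly, then μⁿ ∨ˢᵗ νⁿ → μ ∨ˢᵗ ν and μⁿ ∧ˢᵗ νⁿ → μ ∧ˢᵗ ν weakly, where (μ ∧ˢᵗ ν) has distribution function max(F_μ, F_ν) and (μ ∨ˢᵗ ν) has distribution function min(F_μ, F_ν). -/
open MeasureTheory Set Filter Topology
open scoped NNReal ENNReal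

namespace FosdAux3


lemma tendsto_Ioc {P : ProbabilityMeasure ℝ} {Pn : ℕ → ProbabilityMeasure ℝ} {S : Set ℝ}
    (hconv : ∀ s ∈ S, Tendsto (fun n => (Pn n : Measure ℝ) (Iic s)) atTop
      (𝓝 ((P : Measure ℝ) (Iic s))))
    {a b : ℝ} (ha : a ∈ S) (hb : b ∈ S) :
    Tendsto (fun n => (Pn n : Measure ℝ) (Ioc a b)) atTop
      (𝓝 ((P : Measure ℝ) (Ioc a b))) := by
  rcases le_or_gt a b with hab | hab
  · have key : ∀ (Q : Measure ℝ), IsFiniteMeasure Q → Q (Ioc a b) = Q (Iic b) - Q (Iic a) := by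
      intro Q hQ
      rw [← Iic_sdiff_Iic, measure_diff (Iic_subset_Iic.mpr hab)
        measurableSet_Iic.nullMeasurableSet (measure_ne_top Q _)]
    have h1 := key (P : Measure ℝ) inferInstance
    have h2 : ∀ n, (Pn n : Measure ℝ) (Ioc a b)
        = (Pn n : Measure ℝ) (Iic b) - (Pn n : Measure ℝ) (Iic a) := fun n =>
      key _ inferInstance
    simp_rw [h1, h2]
    exact ENNReal.Tendsto.sub (hconv b hb) (hconv a ha) (Or.inl (measure_ne_top _ _))
  · simp only [Ioc_eq_empty (not_lt.mpr hab.le), measure_empty]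
    exact tendsto_const_nhds



lemma tendsto_biUnion_Ioc {P : ProbabilityMeasure ℝ} {Pn : ℕ → ProbabilityMeasure ℝ} {S : Set ℝ}
    (hIoc : ∀ a ∈ S, ∀ b ∈ S, Tendsto (fun n => (Pn n : Measure ℝ) (Ioc a b)) atTop
      (𝓝 ((P : Measure ℝ) (Ioc a b)))) :
    ∀ (N : ℕ) (t : Finset (ℝ × ℝ)), t.card ≤ N → (∀ p ∈ t, p.1 ∈ S ∧ p.2 ∈ S) →
    Tendsto (fun n => (Pn n : Measure ℝ) (⋃ p ∈ t, Ioc p.1 p.2)) atTop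
      (𝓝 ((P : Measure ℝ) (⋃ p ∈ t, Ioc p.1 p.2))) := by
  intro N
  induction N with
  | zero =>
    intro t ht _
    rw [Nat.le_zero, Finset.card_eq_zero] at ht
    subst ht
    simp only [Finset.notMem_empty, iUnion_of_empty, iUnion_empty, measure_empty]
    exact tendsto_const_nhds
  | succ N ih =>
    intro t hcard hS
    rcases t.eq_empty_or_nonempty with rfl | ⟨p, hp⟩
    · simp only [Finset.notMem_empty, iUnion_of_empty, iUnion_empty, measure_empty]
      exact tendsto_const_nhds
    · set s := t.erase p with hsdef
      have hts : insert p s = t := Finset.insert_erase hp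
      set A := Ioc p.1 p.2 with hA
      set B := ⋃ q ∈ s, Ioc q.1 q.2 with hB
      have hUnion : (⋃ q ∈ t, Ioc q.1 q.2) = A ∪ B := by
        rw [← hts, Finset.set_biUnion_insert]
      have hBmeas : MeasurableSet B :=
        s.measurableSet_biUnion (fun q _ => measurableSet_Ioc)
      -- intersection as a union over an image finset
      set s' := s.image (fun q : ℝ × ℝ => (max p.1 q.1, min p.2 q.2)) with hs'def
      have hinter : A ∩ B = ⋃ q ∈ s', Ioc q.1 q.2 := by
        rw [hs'def, Finset.set_biUnion_finset_image, hB, inter_iUnion₂]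
        refine iUnion₂_congr fun q hq => ?_
        rw [Ioc_inter_Ioc]
      have hscard : s.card ≤ N := by
        rw [hsdef, Finset.card_erase_of_mem hp]
        omega
      have hs'card : s'.card ≤ N := le_trans (Finset.card_image_le) hscard
      have hsS : ∀ q ∈ s, q.1 ∈ S ∧ q.2 ∈ S := fun q hq => hS q (Finset.mem_of_mem_erase hq)
      have hs'S : ∀ q ∈ s', q.1 ∈ S ∧ q.2 ∈ S := by
        intro q hq
        rw [hs'def, Finset.mem_image] at hq
        obtain ⟨r, hr, rfl⟩ := hq
        constructor
        · rcases max_choice p.1 r.1 with h | h <;> rw [h]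
          exacts [(hS p hp).1, (hsS r hr).1]
        · rcases min_choice p.2 r.2 with h | h <;> rw [h]
          exacts [(hS p hp).2, (hsS r hr).2]
      have hIB := ih s hscard hsS
      have hIAB : Tendsto (fun n => (Pn n : Measure ℝ) (A ∩ B)) atTop
          (𝓝 ((P : Measure ℝ) (A ∩ B))) := by
        rw [hinter]; exact ih s' hs'card hs'S
      have hIA := hIoc p.1 (hS p hp).1 p.2 (hS p hp).2
      have key : ∀ (Q : Measure ℝ), IsFiniteMeasure Q →
          Q (A ∪ B) = Q A + Q B - Q (A ∩ B) := by
        intro Q hQ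
        have := measure_union_add_inter (μ := Q) A hBmeas
        exact (ENNReal.eq_sub_of_add_eq (measure_ne_top Q _) this)
      have h1 := key (P : Measure ℝ) inferInstance
      have h2 : ∀ n, (Pn n : Measure ℝ) (A ∪ B)
          = (Pn n : Measure ℝ) A + (Pn n : Measure ℝ) B - (Pn n : Measure ℝ) (A ∩ B) :=
        fun n => key _ inferInstance
      simp_rw [hUnion, h1, h2]
      exact ENNReal.Tendsto.sub (hIA.add hIB) hIAB
        (Or.inl (by exact ENNReal.add_ne_top.mpr ⟨measure_ne_top _ _, measure_ne_top _ _⟩))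



lemma le_liminf_open {P : ProbabilityMeasure ℝ} {Pn : ℕ → ProbabilityMeasure ℝ} {S : Set ℝ}
    (hS : Dense S)
    (hUnion : ∀ (t : Finset (ℝ × ℝ)), (∀ p ∈ t, p.1 ∈ S ∧ p.2 ∈ S) →
      Tendsto (fun n => (Pn n : Measure ℝ) (⋃ p ∈ t, Ioc p.1 p.2)) atTop
        (𝓝 ((P : Measure ℝ) (⋃ p ∈ t, Ioc p.1 p.2))))
    {G : Set ℝ} (hG : IsOpen G) :
    (P : Measure ℝ) G ≤ atTop.liminf fun n => (Pn n : Measure ℝ) G := by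
  rw [hG.measure_eq_iSup_isCompact]
  refine iSup₂_le fun K hKG => iSup_le fun hK => ?_
  -- cover K by good intervals
  set ι := {p : ℝ × ℝ // p.1 ∈ S ∧ p.2 ∈ S ∧ Ioc p.1 p.2 ⊆ G} with hι
  have hcov : K ⊆ ⋃ i : ι, Ioo i.1.1 i.1.2 := by
    intro x hx
    obtain ⟨δ, δpos, hδ⟩ := Metric.isOpen_iff.mp hG x (hKG hx)
    obtain ⟨a, haS, ha⟩ := hS.exists_mem_open isOpen_Ioo
      (nonempty_Ioo.mpr (by linarith : x - δ < x))
    obtain ⟨b, hbS, hb⟩ := hS.exists_mem_open isOpen_Ioo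
      (nonempty_Ioo.mpr (by linarith : x < x + δ))
    have hsub : Ioc a b ⊆ G := by
      refine subset_trans ?_ hδ
      rw [Real.ball_eq_Ioo]
      intro y hy
      exact ⟨ha.1.trans hy.1, hy.2.trans_lt hb.2⟩
    exact mem_iUnion.mpr ⟨⟨(a, b), haS, hbS, hsub⟩, ha.2, hb.1⟩
  obtain ⟨t, ht⟩ := hK.elim_finite_subcover (fun i : ι => Ioo i.1.1 i.1.2)
    (fun i => isOpen_Ioo) hcov
  set t' := t.image (Subtype.val) with ht'
  set U := ⋃ p ∈ t', Ioc p.1 p.2 with hU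
  have hKU : K ⊆ U := by
    refine subset_trans ht ?_
    rw [hU, ht', Finset.set_biUnion_finset_image]
    exact iUnion₂_mono fun i _ => Ioo_subset_Ioc_self
  have hUG : U ⊆ G := by
    rw [hU, ht', Finset.set_biUnion_finset_image]
    exact iUnion₂_subset fun i _ => i.2.2.2
  have htend := hUnion t' (by
    intro p hp
    rw [ht', Finset.mem_image] at hp
    obtain ⟨i, _, rfl⟩ := hp
    exact ⟨i.2.1, i.2.2.1⟩)
  calc (P : Measure ℝ) K ≤ (P : Measure ℝ) U := measure_mono hKU
    _ = atTop.liminf fun n => (Pn n : Measure ℝ) U := htend.liminf_eq.symm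
    _ ≤ atTop.liminf fun n => (Pn n : Measure ℝ) G :=
        liminf_le_liminf (Eventually.of_forall fun n => measure_mono hUG)

lemma tendsto_of_cdf_dense {P : ProbabilityMeasure ℝ} {Pn : ℕ → ProbabilityMeasure ℝ} {S : Set ℝ}
    (hS : Dense S)
    (hconv : ∀ s ∈ S, Tendsto (fun n => (Pn n : Measure ℝ) (Iic s)) atTop
      (𝓝 ((P : Measure ℝ) (Iic s)))) :
    Tendsto Pn atTop (𝓝 P) := by
  have hIoc : ∀ a ∈ S, ∀ b ∈ S, Tendsto (fun n => (Pn n : Measure ℝ) (Ioc a b)) atTop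
      (𝓝 ((P : Measure ℝ) (Ioc a b))) := fun a ha b hb => tendsto_Ioc hconv ha hb
  have hUnion := tendsto_biUnion_Ioc (P := P) (Pn := Pn) hIoc
  apply tendsto_of_forall_isOpen_le_liminf
  intro G hG
  have key := le_liminf_open hS (fun t ht => hUnion t.card t le_rfl ht) hG
  have aux : (ENNReal.ofNNReal (atTop.liminf fun n => Pn n G))
      = atTop.liminf (fun n => ((Pn n G : ℝ≥0) : ℝ≥0∞)) := by
    refine Monotone.map_liminf_of_continuousAt (F := atTop) ENNReal.coe_mono
      (fun n => Pn n G) ENNReal.continuous_coe.continuousAt ?_ ?_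
    · exact IsBoundedUnder.isCoboundedUnder_ge ⟨1, by simp⟩
    · exact ⟨0, by simp⟩
  rw [← ENNReal.coe_le_coe, aux]
  simpa only [ProbabilityMeasure.ennreal_coeFn_eq_coeFn_toMeasure] using key

lemma cdf_tendsto_of_nonatom {P : ProbabilityMeasure ℝ} {Pn : ℕ → ProbabilityMeasure ℝ}
    (hP : Tendsto Pn atTop (𝓝 P)) {s : ℝ} (hs : (P : Measure ℝ) {s} = 0) :
    Tendsto (fun n => (Pn n : Measure ℝ) (Iic s)) atTop (𝓝 ((P : Measure ℝ) (Iic s))) := by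
  have hnull : P (frontier (Iic s)) = 0 := by
    rw [frontier_Iic]
    have h := ProbabilityMeasure.ennreal_coeFn_eq_coeFn_toMeasure P {s}
    rw [hs] at h
    exact_mod_cast h
  have key := ProbabilityMeasure.tendsto_measure_of_null_frontier_of_tendsto hP hnull
  have key2 := ENNReal.tendsto_coe.mpr key
  simpa only [ProbabilityMeasure.ennreal_coeFn_eq_coeFn_toMeasure] using key2

end FosdAux3

/-- Joint continuity, with respect to weak convergence, of the lattice operations on
`𝒫(ℝ)` induced by first order stochastic dominance: the infimum `μ ∧ˢᵗ ν` has cdf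
`max (F_μ, F_ν)` and the supremum `μ ∨ˢᵗ ν` has cdf `min (F_μ, F_ν)`. -/
theorem fosd_lattice_ops_weakly_continuous
    (μn νn ln un : ℕ → ProbabilityMeasure ℝ) (μ ν l u : ProbabilityMeasure ℝ)
    (hμ : Tendsto μn atTop (𝓝 μ)) (hν : Tendsto νn atTop (𝓝 ν))
    (hln : ∀ n, ∀ s : ℝ, (ln n : Measure ℝ) (Iic s)
        = max ((μn n : Measure ℝ) (Iic s)) ((νn n : Measure ℝ) (Iic s)))
    (hl : ∀ s : ℝ, (l : Measure ℝ) (Iic s)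
        = max ((μ : Measure ℝ) (Iic s)) ((ν : Measure ℝ) (Iic s)))
    (hun : ∀ n, ∀ s : ℝ, (un n : Measure ℝ) (Iic s)
        = min ((μn n : Measure ℝ) (Iic s)) ((νn n : Measure ℝ) (Iic s)))
    (hu : ∀ s : ℝ, (u : Measure ℝ) (Iic s)
        = min ((μ : Measure ℝ) (Iic s)) ((ν : Measure ℝ) (Iic s))) :
    Tendsto ln atTop (𝓝 l) ∧ Tendsto un atTop (𝓝 u) := by
  -- the (countably many) atoms of μ and ν
  set S : Set ℝ := {x | (μ : Measure ℝ) {x} = 0 ∧ (ν : Measure ℝ) {x} = 0} with hSdef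
  have hcount : ∀ (Q : Measure ℝ), IsFiniteMeasure Q → Set.Countable {x : ℝ | Q {x} ≠ 0} := by
    intro Q hQ
    have := MeasureTheory.Measure.countable_meas_level_set_pos (μ := Q) (g := id) measurable_id
    refine this.mono ?_
    intro x hx
    simp only [mem_setOf_eq, id] at hx ⊢
    rw [Set.setOf_eq_eq_singleton]
    exact pos_iff_ne_zero.mpr hx
  have hSc : Set.Countable Sᶜ := by
    have : Sᶜ ⊆ {x : ℝ | (μ : Measure ℝ) {x} ≠ 0} ∪ {x : ℝ | (ν : Measure ℝ) {x} ≠ 0} := by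
      intro x hx
      rw [hSdef] at hx
      simp only [mem_compl_iff, mem_setOf_eq, not_and_or] at hx
      simpa using hx
    exact ((hcount _ inferInstance).union (hcount _ inferInstance)).mono this
  have hS : Dense S := by
    have := hSc.dense_compl ℝ
    simpa using this
  have hμc : ∀ s ∈ S, Tendsto (fun n => (μn n : Measure ℝ) (Iic s)) atTop
      (𝓝 ((μ : Measure ℝ) (Iic s))) := fun s hs => FosdAux3.cdf_tendsto_of_nonatom hμ hs.1
  have hνc : ∀ s ∈ S, Tendsto (fun n => (νn n : Measure ℝ) (Iic s)) atTop
      (𝓝 ((ν : Measure ℝ) (Iic s))) := fun s hs => FosdAux3.cdf_tendsto_of_nonatom hν hs.2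
  constructor
  · refine FosdAux3.tendsto_of_cdf_dense hS ?_
    intro s hs
    have := (hμc s hs).max (hνc s hs)
    simp only [hln, hl]
    exact this
  · refine FosdAux3.tendsto_of_cdf_dense hS ?_
    intro s hs
    have := (hμc s hs).min (hνc s hs)
    simp only [hun, hu]
    exact this
end

section
/- Let (S, 𝒮, π) be a finite measure space and let μ̲ ≤ˢᵗ μ̄ be two Borel probability measures on ℝ. Let L be the set of π-equivalence classes of measurable maps S → [μ̲, μ̄] (with [μ̲, μ̄] the order interval for first order stochastic dominance, endowed with the Borel σ-algebra of the weak topology), ordered by μ ≤ᴸ ν iff μ_t ≤ˢᵗ ν_t for π-almost all t. Then (L, ≤ᴸ) is a complete lattice: every nonempty subset of L has a least upper bound and a greatest lower bound. -/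
open MeasureTheory Set

/-- First order stochastic dominance on probability measures on ℝ. -/
def StLE (μ ν : ProbabilityMeasure ℝ) : Prop :=
  ∀ s : ℝ, (ν : Measure ℝ) (Iic s) ≤ (μ : Measure ℝ) (Iic s)

/-- A flow belongs to the order interval `[μlo, μhi]` at a point. -/
def InInterval (μlo μhi μ : ProbabilityMeasure ℝ) : Prop :=
  StLE μlo μ ∧ StLE μ μhi

/-- The π-a.e. order `≤ᴸ` on flows of probability measures. -/
def FlowLE {S : Type*} [MeasurableSpace S] (π : Measure S)
    (f g : S → ProbabilityMeasure ℝ) : Prop :=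
  ∀ᵐ t ∂π, StLE (f t) (g t)

open scoped ENNReal NNReal Topology
open Filter

noncomputable section

namespace FlowAux

/-- cdf of a probability measure on ℝ, with values in `ℝ≥0∞`. -/
def cdfE (μ : ProbabilityMeasure ℝ) (s : ℝ) : ℝ≥0∞ := (μ : Measure ℝ) (Iic s)

lemma cdfE_le_one (μ : ProbabilityMeasure ℝ) (s : ℝ) : cdfE μ s ≤ 1 := prob_le_one

lemma cdfE_ne_top (μ : ProbabilityMeasure ℝ) (s : ℝ) : cdfE μ s ≠ ∞ :=
  ((cdfE_le_one μ s).trans_lt ENNReal.one_lt_top).ne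

lemma cdfE_mono (μ : ProbabilityMeasure ℝ) : Monotone (cdfE μ) :=
  fun _ _ h => measure_mono (Iic_subset_Iic.2 h)

lemma iInter_Iic_rat (s : ℝ) :
    ⋂ q : {q : ℚ // s < (q : ℝ)}, Iic (q.1 : ℝ) = Iic s := by
  ext x
  simp only [mem_iInter, mem_Iic, Subtype.forall]
  constructor
  · intro h
    by_contra hx
    push_neg at hx
    obtain ⟨q, hq1, hq2⟩ := exists_rat_btwn hx
    exact absurd (h q hq1) (not_le.2 hq2)
  · intro h q hq
    exact h.trans hq.le

lemma cdfE_eq_iInf (μ : ProbabilityMeasure ℝ) (s : ℝ) :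
    cdfE μ s = ⨅ q : {q : ℚ // s < (q : ℝ)}, cdfE μ (q.1 : ℝ) := by
  rw [cdfE, ← iInter_Iic_rat s]
  haveI : Nonempty {q : ℚ // s < (q : ℝ)} := by
    obtain ⟨q, hq⟩ := exists_rat_gt s
    exact ⟨⟨q, hq⟩⟩
  refine Directed.measure_iInter (fun q => measurableSet_Iic.nullMeasurableSet) ?_ ?_
  · intro q r
    obtain ⟨m, hm⟩ : ∃ m : ℚ, m ≤ q.1 ∧ m ≤ r.1 ∧ s < (m:ℝ) := by
      refine ⟨min q.1 r.1, min_le_left _ _, min_le_right _ _, ?_⟩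
      rcases min_cases q.1 r.1 with ⟨h, _⟩ | ⟨h, _⟩ <;> rw [h]
      exacts [q.2, r.2]
    exact ⟨⟨m, hm.2.2⟩, Iic_subset_Iic.2 (by exact_mod_cast hm.1),
      Iic_subset_Iic.2 (by exact_mod_cast hm.2.1)⟩
  · exact ⟨Classical.arbitrary _, measure_ne_top _ _⟩

lemma stle_iff {μ ν : ProbabilityMeasure ℝ} : StLE μ ν ↔ ∀ s, cdfE ν s ≤ cdfE μ s := Iff.rfl

lemma stle_of_rat {μ ν : ProbabilityMeasure ℝ} (h : ∀ q : ℚ, cdfE ν (q:ℝ) ≤ cdfE μ (q:ℝ)) :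
    StLE μ ν := by
  intro s
  show cdfE ν s ≤ cdfE μ s
  rw [cdfE_eq_iInf, cdfE_eq_iInf]
  exact iInf_mono fun q => h q.1

lemma cdfE_eq_of_rat {μ ν : ProbabilityMeasure ℝ} (h : ∀ q : ℚ, cdfE μ (q:ℝ) = cdfE ν (q:ℝ)) :
    ∀ s, cdfE μ s = cdfE ν s := by
  intro s
  rw [cdfE_eq_iInf, cdfE_eq_iInf]
  exact iInf_congr fun q => h q.1

/-- Evaluation at a closed set is measurable for the Borel σ-algebra of the weak topology. -/
lemma measurable_apply_closed {F : Set ℝ} (hF : IsClosed F) :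
    @Measurable (ProbabilityMeasure ℝ) ℝ≥0∞ (borel _) _
      (fun μ => (μ : Measure ℝ) F) := by
  letI : MeasurableSpace (ProbabilityMeasure ℝ) := borel _
  haveI : BorelSpace (ProbabilityMeasure ℝ) := ⟨rfl⟩
  have key : ∀ n : ℕ, Continuous fun μ : ProbabilityMeasure ℝ =>
      ∫⁻ x, (hF.apprSeq n x : ℝ≥0∞) ∂(μ : Measure ℝ) := by
    intro n
    have h1 := MeasureTheory.ProbabilityMeasure.continuous_testAgainstNN_eval (Ω := ℝ)
      (hF.apprSeq n)
    have h2 : ∀ μ : ProbabilityMeasure ℝ,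
        ((μ.toFiniteMeasure.testAgainstNN (hF.apprSeq n) : ℝ≥0) : ℝ≥0∞)
          = ∫⁻ x, (hF.apprSeq n x : ℝ≥0∞) ∂(μ : Measure ℝ) := by
      intro μ
      rw [FiniteMeasure.testAgainstNN, ENNReal.coe_toNNReal]
      · rfl
      · have hb : (fun x : ℝ => ((hF.apprSeq n x : ℝ≥0) : ℝ≥0∞))
            ≤ fun _ => ((nndist (hF.apprSeq n) 0 : ℝ≥0) : ℝ≥0∞) := fun x =>
          ENNReal.coe_le_coe.2 (BoundedContinuousFunction.NNReal.upper_bound _ x)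
        refine ((lintegral_mono hb).trans_lt ?_).ne
        rw [lintegral_const]
        exact ENNReal.mul_lt_top ENNReal.coe_lt_top (measure_lt_top _ _)
    have := (ENNReal.continuous_coe.comp h1)
    simpa only [Function.comp_def, h2] using this
  refine ENNReal.measurable_of_tendsto (fun n => (key n).measurable) ?_
  rw [tendsto_pi_nhds]
  intro μ
  exact HasOuterApproxClosed.tendsto_lintegral_apprSeq hF _

lemma measurable_cdfE (s : ℝ) :
    @Measurable (ProbabilityMeasure ℝ) ℝ≥0∞ (borel _) _ (fun μ => cdfE μ s) :=
  measurable_apply_closed isClosed_Iic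

end FlowAux

namespace FlowAux

variable (μlo μhi : ProbabilityMeasure ℝ)

/-- Clamped version of a function on rationals, forced between the cdfs of `μhi` and `μlo`. -/
def clampJ (J : ℚ → ℝ≥0∞) (q : ℚ) : ℝ≥0∞ :=
  max (cdfE μhi (q:ℝ)) (min (J q) (cdfE μlo (q:ℝ)))

/-- Right-continuous regularization: candidate cdf. -/
def reg (J : ℚ → ℝ≥0∞) (s : ℝ) : ℝ≥0∞ :=
  ⨅ q : {q : ℚ // s < (q:ℝ)}, clampJ μlo μhi J q.1

variable (hlohi : StLE μlo μhi)

lemma clampJ_le_one (J : ℚ → ℝ≥0∞) (q : ℚ) : clampJ μlo μhi J q ≤ 1 :=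
  max_le (cdfE_le_one _ _) ((min_le_right _ _).trans (cdfE_le_one _ _))

lemma clampJ_ne_top (J : ℚ → ℝ≥0∞) (q : ℚ) : clampJ μlo μhi J q ≠ ∞ :=
  ((clampJ_le_one μlo μhi J q).trans_lt ENNReal.one_lt_top).ne

include hlohi in
lemma reg_le_lo (J : ℚ → ℝ≥0∞) (s : ℝ) : reg μlo μhi J s ≤ cdfE μlo s := by
  rw [cdfE_eq_iInf]
  refine iInf_mono fun q => ?_
  exact max_le (hlohi _) (min_le_right _ _)

lemma hi_le_reg (J : ℚ → ℝ≥0∞) (s : ℝ) : cdfE μhi s ≤ reg μlo μhi J s := by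
  rw [cdfE_eq_iInf]
  exact iInf_mono fun q => le_max_left _ _

include hlohi in
lemma reg_le_one (J : ℚ → ℝ≥0∞) (s : ℝ) : reg μlo μhi J s ≤ 1 :=
  (reg_le_lo μlo μhi hlohi J s).trans (cdfE_le_one _ _)

include hlohi in
lemma reg_ne_top (J : ℚ → ℝ≥0∞) (s : ℝ) : reg μlo μhi J s ≠ ∞ :=
  ((reg_le_one μlo μhi hlohi J s).trans_lt ENNReal.one_lt_top).ne

lemma reg_mono (J : ℚ → ℝ≥0∞) : Monotone (reg μlo μhi J) := by
  intro a b hab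
  exact le_iInf fun q => iInf_le_of_le ⟨q.1, hab.trans_lt q.2⟩ le_rfl

lemma reg_mono_J {J J' : ℚ → ℝ≥0∞} (h : ∀ q, J q ≤ J' q) (s : ℝ) :
    reg μlo μhi J s ≤ reg μlo μhi J' s :=
  iInf_mono fun q => max_le_max le_rfl (min_le_min (h q.1) le_rfl)

/-- The Stieltjes function associated with the regularized cdf. -/
def regSt (J : ℚ → ℝ≥0∞) : StieltjesFunction ℝ where
  toFun s := (reg μlo μhi J s).toReal
  mono' a b hab :=
    ENNReal.toReal_mono (reg_ne_top μlo μhi hlohi J b) (reg_mono μlo μhi J hab)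
  right_continuous' x := by
    rw [ContinuousWithinAt]
    refine tendsto_order.2 ⟨fun a ha => ?_, fun a ha => ?_⟩
    · filter_upwards [self_mem_nhdsWithin] with r hr
      exact ha.trans_le
        (ENNReal.toReal_mono (reg_ne_top μlo μhi hlohi J r) (reg_mono μlo μhi J hr))
    · have hx : reg μlo μhi J x < ENNReal.ofReal a := by
        rw [ENNReal.lt_ofReal_iff_toReal_lt (reg_ne_top μlo μhi hlohi J x)]
        exact ha
      obtain ⟨q, hq⟩ := iInf_lt_iff.mp hx
      have hIio : Iio (q.1 : ℝ) ∈ 𝓝[Ici x] x :=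
        mem_nhdsWithin_of_mem_nhds (Iio_mem_nhds q.2)
      filter_upwards [hIio] with r hr
      have h1 : reg μlo μhi J r ≤ clampJ μlo μhi J q.1 := iInf_le_of_le ⟨q.1, hr⟩ le_rfl
      exact ENNReal.toReal_lt_of_lt_ofReal (h1.trans_lt hq)

lemma tendsto_cdfE_toReal_atTop (μ : ProbabilityMeasure ℝ) :
    Tendsto (fun s => (cdfE μ s).toReal) atTop (𝓝 1) := by
  have h := tendsto_measure_Iic_atTop (μ : Measure ℝ)
  rw [measure_univ] at h
  have := (ENNReal.tendsto_toReal ENNReal.one_ne_top).comp h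
  simpa [Function.comp_def, cdfE] using this

lemma tendsto_cdfE_toReal_atBot (μ : ProbabilityMeasure ℝ) :
    Tendsto (fun s => (cdfE μ s).toReal) atBot (𝓝 0) := by
  have hempty : ⋂ x : ℝ, Iic x = (∅ : Set ℝ) := by
    rw [eq_empty_iff_forall_notMem]
    intro x hx
    have := (mem_iInter.1 hx) (x - 1)
    simp only [mem_Iic] at this
    linarith
  have h := tendsto_measure_iInter_atBot (μ := (μ : Measure ℝ))
    (fun x => measurableSet_Iic.nullMeasurableSet) monotone_Iic
    ⟨0, measure_ne_top _ _⟩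
  rw [hempty, measure_empty] at h
  have := (ENNReal.tendsto_toReal ENNReal.zero_ne_top).comp h
  simpa [Function.comp_def, cdfE] using this

include hlohi in
lemma tendsto_regSt_atBot (J : ℚ → ℝ≥0∞) :
    Tendsto (regSt μlo μhi hlohi J) atBot (𝓝 0) := by
  refine tendsto_of_tendsto_of_tendsto_of_le_of_le tendsto_const_nhds
    (tendsto_cdfE_toReal_atBot μlo) (fun s => ENNReal.toReal_nonneg) fun s => ?_
  exact ENNReal.toReal_mono (cdfE_ne_top _ _) (reg_le_lo μlo μhi hlohi J s)

include hlohi in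
lemma tendsto_regSt_atTop (J : ℚ → ℝ≥0∞) :
    Tendsto (regSt μlo μhi hlohi J) atTop (𝓝 1) := by
  refine tendsto_of_tendsto_of_tendsto_of_le_of_le (tendsto_cdfE_toReal_atTop μhi)
    tendsto_const_nhds (fun s => ?_) fun s => ?_
  · exact ENNReal.toReal_mono (reg_ne_top μlo μhi hlohi J s) (hi_le_reg μlo μhi J s)
  · have := ENNReal.toReal_mono ENNReal.one_ne_top (reg_le_one μlo μhi hlohi J s)
    exact this.trans_eq ENNReal.toReal_one

/-- The probability measure with cdf `reg μlo μhi J`. -/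
def thePM (J : ℚ → ℝ≥0∞) : ProbabilityMeasure ℝ :=
  ⟨(regSt μlo μhi hlohi J).measure,
    (regSt μlo μhi hlohi J).isProbabilityMeasure
      (tendsto_regSt_atBot μlo μhi hlohi J) (tendsto_regSt_atTop μlo μhi hlohi J)⟩

lemma cdfE_thePM (J : ℚ → ℝ≥0∞) (s : ℝ) :
    cdfE (thePM μlo μhi hlohi J) s = reg μlo μhi J s := by
  show (regSt μlo μhi hlohi J).measure (Iic s) = _
  rw [StieltjesFunction.measure_Iic _ (tendsto_regSt_atBot μlo μhi hlohi J), sub_zero]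
  show ENNReal.ofReal (reg μlo μhi J s).toReal = _
  rw [ENNReal.ofReal_toReal (reg_ne_top μlo μhi hlohi J s)]

include hlohi in
lemma stle_lo_thePM (J : ℚ → ℝ≥0∞) : StLE μlo (thePM μlo μhi hlohi J) := fun s => by
  rw [show ((thePM μlo μhi hlohi J : Measure ℝ) (Iic s)) = cdfE (thePM μlo μhi hlohi J) s from rfl,
    cdfE_thePM]
  exact reg_le_lo μlo μhi hlohi J s

include hlohi in
lemma stle_thePM_hi (J : ℚ → ℝ≥0∞) : StLE (thePM μlo μhi hlohi J) μhi := fun s => by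
  rw [show ((thePM μlo μhi hlohi J : Measure ℝ) (Iic s)) = cdfE (thePM μlo μhi hlohi J) s from rfl,
    cdfE_thePM]
  exact hi_le_reg μlo μhi J s

include hlohi in
/-- `thePM J` dominates `u` provided `J ≤ cdf u` at rationals. -/
lemma stle_thePM_of {J : ℚ → ℝ≥0∞} {u : ProbabilityMeasure ℝ} (hu : StLE u μhi)
    (hJ : ∀ q : ℚ, J q ≤ cdfE u (q:ℝ)) : StLE u (thePM μlo μhi hlohi J) := by
  intro s
  show cdfE (thePM μlo μhi hlohi J) s ≤ cdfE u s
  rw [cdfE_thePM, cdfE_eq_iInf u]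
  refine iInf_mono fun q => ?_
  exact max_le (hu _) ((min_le_left _ _).trans (hJ q.1))

include hlohi in
/-- `u` dominates `thePM J` provided `cdf u ≤ J` at rationals. -/
lemma thePM_stle_of {J : ℚ → ℝ≥0∞} {u : ProbabilityMeasure ℝ} (hu : StLE μlo u)
    (hJ : ∀ q : ℚ, cdfE u (q:ℝ) ≤ J q) : StLE (thePM μlo μhi hlohi J) u := by
  intro s
  show cdfE u s ≤ cdfE (thePM μlo μhi hlohi J) s
  rw [cdfE_thePM]
  refine le_iInf fun q => ?_
  refine (cdfE_mono u q.2.le).trans ?_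
  exact le_max_of_le_right (le_min (hJ q.1) (hu _))

end FlowAux

namespace FlowAux

/-! ### Measurability of maps into `ProbabilityMeasure ℝ` with its weak-topology Borel σ-algebra -/

/-- If all rational cdf evaluations of a flow are measurable, then so are all evaluations. -/
lemma measurable_apply_of_cdf {S : Type*} [MeasurableSpace S] (g : S → ProbabilityMeasure ℝ)
    (hcdf : ∀ q : ℚ, Measurable fun t => cdfE (g t) (q:ℝ)) {A : Set ℝ} (hA : MeasurableSet A) :
    Measurable fun t => (g t : Measure ℝ) A := by
  have h_eq : (inferInstance : MeasurableSpace ℝ)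
      = MeasurableSpace.generateFrom (⋃ a : ℚ, {Iic (a : ℝ)}) :=
    BorelSpace.measurable_eq.trans Real.borel_eq_generateFrom_Iic_rat
  refine MeasurableSpace.induction_on_inter (C := fun A _ => Measurable fun t => (g t : Measure ℝ) A)
    h_eq Real.isPiSystem_Iic_rat ?_ ?_ ?_ ?_ A hA
  · simp only [measure_empty]
    exact measurable_const
  · intro A hAmem
    simp only [mem_iUnion, mem_singleton_iff] at hAmem
    obtain ⟨q, rfl⟩ := hAmem
    exact hcdf q
  · intro A hAm hC
    have : ∀ t, (g t : Measure ℝ) Aᶜ = 1 - (g t : Measure ℝ) A := fun t => by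
      rw [measure_compl hAm (measure_ne_top _ _), measure_univ]
    simp only [this]
    exact measurable_const.sub hC
  · intro f hdisj hm hC
    have : ∀ t, (g t : Measure ℝ) (⋃ i, f i) = ∑' i, (g t : Measure ℝ) (f i) := fun t =>
      measure_iUnion hdisj hm
    simp only [this]
    exact Measurable.ennreal_tsum hC

/-! ### A finite grid discretization -/

def gB (k : ℕ) : ℤ := ((k:ℤ) + 1) ^ 2

def gpt (k : ℕ) (j : ℤ) : ℝ := (j : ℝ) / ((k : ℝ) + 1)

def gjdx (k : ℕ) (x : ℝ) : ℤ := max (-(gB k)) (min (gB k) ⌈x * ((k : ℝ) + 1)⌉)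

def grnd (k : ℕ) (x : ℝ) : ℝ := gpt k (gjdx k x)

lemma gpt_injective (k : ℕ) : Function.Injective (gpt k) := by
  intro a b hab
  have hk : ((k : ℝ) + 1) ≠ 0 := by positivity
  have : (a : ℝ) = (b : ℝ) := by
    simp only [gpt] at hab
    exact (div_left_inj' hk).1 hab
  exact_mod_cast this

lemma gjdx_mem (k : ℕ) (x : ℝ) : gjdx k x ∈ Finset.Icc (-(gB k)) (gB k) := by
  have hB : (0:ℤ) ≤ gB k := by simp only [gB]; positivity
  rw [Finset.mem_Icc]
  constructor
  · exact le_max_left _ _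
  · exact max_le (by linarith) (min_le_left _ _)

lemma grnd_monotone (k : ℕ) : Monotone (grnd k) := by
  intro x y hxy
  have h1 : gjdx k x ≤ gjdx k y := by
    have : ⌈x * ((k : ℝ) + 1)⌉ ≤ ⌈y * ((k : ℝ) + 1)⌉ :=
      Int.ceil_le_ceil (by nlinarith [hxy])
    exact max_le_max le_rfl (min_le_min le_rfl this)
  rw [grnd, grnd, gpt, gpt]
  have h2 : ((gjdx k x : ℤ) : ℝ) ≤ ((gjdx k y : ℤ) : ℝ) := by exact_mod_cast h1
  gcongr

lemma grnd_measurable (k : ℕ) : Measurable (grnd k) := (grnd_monotone k).measurable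

lemma tendsto_grnd (x : ℝ) : Filter.Tendsto (fun k => grnd k x) atTop (𝓝 x) := by
  have key : ∀ k : ℕ, |x| ≤ (k : ℝ) → x ≤ grnd k x ∧ grnd k x ≤ x + 1 / ((k:ℝ)+1) := by
    intro k hk
    have hn : (0:ℝ) < (k:ℝ) + 1 := by positivity
    have hc1 : x * ((k:ℝ)+1) ≤ (⌈x * ((k:ℝ)+1)⌉ : ℝ) := Int.le_ceil _
    have hc2 : (⌈x * ((k:ℝ)+1)⌉ : ℝ) ≤ x * ((k:ℝ)+1) + 1 := (Int.ceil_lt_add_one _).le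
    have habs : |x * ((k:ℝ)+1)| ≤ (k:ℝ) * ((k:ℝ)+1) := by
      rw [abs_mul, abs_of_pos hn]
      exact mul_le_mul_of_nonneg_right hk hn.le
    have hBr : ((gB k : ℤ) : ℝ) = ((k:ℝ)+1)^2 := by
      rw [gB]; push_cast; ring
    have hub : (⌈x * ((k:ℝ)+1)⌉ : ℝ) ≤ ((gB k : ℤ) : ℝ) := by
      rw [hBr]
      nlinarith [abs_le.1 habs]
    have hlb : (-((gB k : ℤ) : ℝ)) ≤ (⌈x * ((k:ℝ)+1)⌉ : ℝ) := by
      rw [hBr]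
      nlinarith [abs_le.1 habs]
    have hid : gjdx k x = ⌈x * ((k:ℝ)+1)⌉ := by
      rw [gjdx]
      have h1 : ⌈x * ((k:ℝ)+1)⌉ ≤ gB k := by exact_mod_cast hub
      have h2 : -(gB k) ≤ ⌈x * ((k:ℝ)+1)⌉ := by exact_mod_cast hlb
      rw [min_eq_right h1, max_eq_right h2]
    rw [grnd, hid, gpt]
    constructor
    · rw [le_div_iff₀ hn]
      linarith
    · rw [div_le_iff₀ hn]
      have : (x + 1/((k:ℝ)+1)) * ((k:ℝ)+1) = x * ((k:ℝ)+1) + 1 := by field_simp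
      linarith [this]
  have hev : ∀ᶠ k : ℕ in atTop, x ≤ grnd k x ∧ grnd k x ≤ x + 1 / ((k:ℝ)+1) := by
    have : ∀ᶠ k : ℕ in atTop, |x| ≤ (k : ℝ) :=
      (tendsto_natCast_atTop_atTop (R := ℝ)).eventually_ge_atTop |x|
    filter_upwards [this] with k hk using key k hk
  have hupper : Filter.Tendsto (fun k : ℕ => x + 1 / ((k:ℝ)+1)) atTop (𝓝 x) := by
    have h1 := tendsto_one_div_add_atTop_nhds_zero_nat (𝕜 := ℝ)
    have h2 : Filter.Tendsto (fun _ : ℕ => x) atTop (𝓝 x) := tendsto_const_nhds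
    simpa using h2.add h1
  refine tendsto_of_tendsto_of_tendsto_of_le_of_le' tendsto_const_nhds hupper ?_ ?_
  · filter_upwards [hev] with k hk using hk.1
  · filter_upwards [hev] with k hk using hk.2

end FlowAux

namespace FlowAux

/-- Decomposition of the pushforward along `grnd k` as a finite combination of Dirac masses. -/
lemma map_grnd_eq (k : ℕ) (ν : ProbabilityMeasure ℝ) :
    (ν : Measure ℝ).map (grnd k)
      = ∑ j ∈ Finset.Icc (-(gB k)) (gB k),
          ((ν : Measure ℝ) (grnd k ⁻¹' {gpt k j})) • Measure.dirac (gpt k j) := by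
  classical
  ext A hA
  rw [Measure.map_apply (grnd_measurable k) hA, Measure.finset_sum_apply]
  have hsetdec : grnd k ⁻¹' A
      = ⋃ j ∈ ((Finset.Icc (-(gB k)) (gB k)).filter fun j => gpt k j ∈ A),
          grnd k ⁻¹' {gpt k j} := by
    ext x
    simp only [mem_preimage, mem_iUnion, Finset.mem_filter, mem_singleton_iff]
    constructor
    · intro hx
      exact ⟨gjdx k x, ⟨gjdx_mem k x, hx⟩, rfl⟩
    · rintro ⟨j, ⟨_, hjA⟩, hx⟩
      rw [show grnd k x = gpt k (gjdx k x) from rfl] at hx ⊢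
      rw [hx]; exact hjA
  rw [hsetdec, measure_biUnion_finset ?_ ?_]
  · rw [Finset.sum_filter]
    refine Finset.sum_congr rfl fun j _ => ?_
    rw [Measure.smul_apply, Measure.dirac_apply' _ hA, smul_eq_mul]
    by_cases hj : gpt k j ∈ A
    · simp [hj]
    · simp [hj]
  · intro i hi j hj hij
    refine Disjoint.preimage _ ?_
    simp only [disjoint_singleton]
    exact fun h => hij (gpt_injective k h)
  · exact fun j _ => (grnd_measurable k) (measurableSet_singleton _)

lemma sum_weights (k : ℕ) (ν : ProbabilityMeasure ℝ) :
    ∑ j ∈ Finset.Icc (-(gB k)) (gB k), (ν : Measure ℝ) (grnd k ⁻¹' {gpt k j}) = 1 := by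
  have h := congrArg (fun m : Measure ℝ => m univ) (map_grnd_eq k ν)
  simp only [Measure.map_apply (grnd_measurable k) MeasurableSet.univ, preimage_univ,
    measure_univ, Measure.finset_sum_apply, Measure.smul_apply, smul_eq_mul,
    mul_one] at h
  exact h.symm

/-- An atomic measure built from nonnegative weights on the grid. -/
def psiM (k : ℕ) (v : ℤ → ℝ≥0) : Measure ℝ :=
  ∑ j ∈ Finset.Icc (-(gB k)) (gB k), ((v j : ℝ≥0∞)) • Measure.dirac (gpt k j)

lemma psiM_prob (k : ℕ) (v : ℤ → ℝ≥0) (hv : ∑ j ∈ Finset.Icc (-(gB k)) (gB k), v j = 1) :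
    IsProbabilityMeasure (psiM k v) := by
  constructor
  rw [psiM, Measure.finset_sum_apply]
  simp only [Measure.smul_apply, measure_univ, smul_eq_mul, mul_one]
  rw [← ENNReal.coe_finset_sum, hv, ENNReal.coe_one]

/-- The atomic probability measure as a function of the weight vector. -/
def Psi (k : ℕ) (v : {v : ℤ → ℝ≥0 // ∑ j ∈ Finset.Icc (-(gB k)) (gB k), v j = 1}) :
    ProbabilityMeasure ℝ :=
  ⟨psiM k v.1, psiM_prob k v.1 v.2⟩

lemma continuous_Psi (k : ℕ) : Continuous (Psi k) := by
  rw [(ProbabilityMeasure.toFiniteMeasure_isEmbedding ℝ).continuous_iff]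
  rw [(FiniteMeasure.isEmbedding_toWeakDualBCNN ℝ).continuous_iff]
  apply WeakDual.continuous_of_continuous_eval
  intro f
  have key : ∀ v : {v : ℤ → ℝ≥0 // ∑ j ∈ Finset.Icc (-(gB k)) (gB k), v j = 1},
      ((FiniteMeasure.toWeakDualBCNN ∘ ProbabilityMeasure.toFiniteMeasure ∘ Psi k) v) f
        = ∑ j ∈ Finset.Icc (-(gB k)) (gB k), v.1 j * f (gpt k j) := by
    intro v
    show ((Psi k v).toFiniteMeasure.toWeakDualBCNN) f = _
    rw [FiniteMeasure.toWeakDualBCNN_apply]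
    show (∫⁻ x, (f x : ℝ≥0∞) ∂((Psi k v).toFiniteMeasure : Measure ℝ)).toNNReal = _
    have hco : ((Psi k v).toFiniteMeasure : Measure ℝ) = psiM k v.1 := rfl
    rw [hco, psiM, lintegral_finset_sum_measure]
    simp only [lintegral_smul_measure, lintegral_dirac, smul_eq_mul]
    rw [show ∑ j ∈ Finset.Icc (-(gB k)) (gB k), ((v.1 j : ℝ≥0∞)) * (f (gpt k j) : ℝ≥0∞)
        = ((∑ j ∈ Finset.Icc (-(gB k)) (gB k), v.1 j * f (gpt k j) : ℝ≥0) : ℝ≥0∞) by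
      push_cast; rfl]
    rw [ENNReal.toNNReal_coe]
  simp only [key]
  exact continuous_finset_sum _ fun j _ =>
    (((continuous_apply j).comp continuous_subtype_val).mul continuous_const)

end FlowAux

namespace FlowAux

/-- The key measurability lemma: the regularized construction depends measurably on the data. -/
lemma measurable_thePM {S : Type*} [MeasurableSpace S] (μlo μhi : ProbabilityMeasure ℝ)
    (hlohi : StLE μlo μhi) (J : S → ℚ → ℝ≥0∞) (hJ : ∀ q : ℚ, Measurable fun t => J t q) :
    @Measurable S (ProbabilityMeasure ℝ) _ (borel _) (fun t => thePM μlo μhi hlohi (J t)) := by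
  letI : MeasurableSpace (ProbabilityMeasure ℝ) := borel _
  haveI : BorelSpace (ProbabilityMeasure ℝ) := ⟨rfl⟩
  set g : S → ProbabilityMeasure ℝ := fun t => thePM μlo μhi hlohi (J t) with hgdef
  have hcdf : ∀ q : ℚ, Measurable fun t => cdfE (g t) (q:ℝ) := by
    intro q
    have he : (fun t => cdfE (g t) (q:ℝ)) = fun t => reg μlo μhi (J t) (q:ℝ) :=
      funext fun t => cdfE_thePM μlo μhi hlohi (J t) (q:ℝ)
    rw [he]
    exact Measurable.iInf fun r => measurable_const.max ((hJ r.1).min measurable_const)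
  have happly : ∀ {A : Set ℝ}, MeasurableSet A → Measurable fun t => (g t : Measure ℝ) A :=
    fun hA => measurable_apply_of_cdf g hcdf hA
  have hwsum : ∀ (k : ℕ) (t : S), ∑ j ∈ Finset.Icc (-(gB k)) (gB k),
      ((g t : Measure ℝ) (grnd k ⁻¹' {gpt k j})).toNNReal = 1 := by
    intro k t
    have h2 : ((∑ j ∈ Finset.Icc (-(gB k)) (gB k),
        ((g t : Measure ℝ) (grnd k ⁻¹' {gpt k j})).toNNReal : ℝ≥0) : ℝ≥0∞) = 1 := by
      rw [ENNReal.coe_finset_sum,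
        Finset.sum_congr rfl (fun j _ => ENNReal.coe_toNNReal (measure_ne_top _ _))]
      exact sum_weights k (g t)
    exact_mod_cast h2
  let vfun : ∀ k : ℕ, S → {v : ℤ → ℝ≥0 // ∑ j ∈ Finset.Icc (-(gB k)) (gB k), v j = 1} :=
    fun k t => ⟨fun j => ((g t : Measure ℝ) (grnd k ⁻¹' {gpt k j})).toNNReal, hwsum k t⟩
  have hvmeas : ∀ k, Measurable (vfun k) := by
    intro k
    refine Measurable.subtype_mk (measurable_pi_lambda _ fun j => ?_)
    exact (happly ((grnd_measurable k) (measurableSet_singleton _))).ennreal_toNNReal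
  have happrox : ∀ k, Measurable fun t => Psi k (vfun k t) := by
    intro k
    haveI : OpensMeasurableSpace {v : ℤ → ℝ≥0 // ∑ j ∈ Finset.Icc (-(gB k)) (gB k), v j = 1} :=
      Subtype.opensMeasurableSpace {v : ℤ → ℝ≥0 | ∑ j ∈ Finset.Icc (-(gB k)) (gB k), v j = 1}
    exact (continuous_Psi k).measurable.comp (hvmeas k)
  have hPM : ∀ (k : ℕ) (t : S),
      (Psi k (vfun k t) : Measure ℝ) = (g t : Measure ℝ).map (grnd k) := by
    intro k t
    rw [map_grnd_eq k (g t)]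
    show psiM k _ = _
    rw [psiM]
    exact Finset.sum_congr rfl fun j _ => by
      rw [ENNReal.coe_toNNReal (measure_ne_top _ _)]
  have htend : ∀ t, Filter.Tendsto (fun k => Psi k (vfun k t)) atTop (𝓝 (g t)) := by
    intro t
    rw [ProbabilityMeasure.tendsto_iff_forall_integral_tendsto]
    intro f
    have hInt : ∀ k, ∫ x, f x ∂(Psi k (vfun k t) : Measure ℝ)
        = ∫ x, f (grnd k x) ∂(g t : Measure ℝ) := by
      intro k
      rw [hPM k t, integral_map (grnd_measurable k).aemeasurable
        f.continuous.aestronglyMeasurable]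
    simp only [hInt]
    apply tendsto_integral_of_dominated_convergence (bound := fun _ => ‖f‖)
    · exact fun k => (f.continuous.measurable.comp (grnd_measurable k)).aestronglyMeasurable
    · exact integrable_const _
    · exact fun k => Filter.Eventually.of_forall fun x => f.norm_coe_le_norm _
    · exact Filter.Eventually.of_forall fun x => (f.continuous.tendsto x).comp (tendsto_grnd x)
  exact measurable_of_tendsto_metrizable happrox (tendsto_pi_nhds.2 htend)

end FlowAux

namespace FlowAux

/-! ### A strictly monotone bounded functional -/

def eRat (n : ℕ) : ℚ := (Denumerable.eqv ℚ).symm n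

lemma eRat_surjective : Function.Surjective eRat := (Denumerable.eqv ℚ).symm.surjective

def Phi (μ : ProbabilityMeasure ℝ) : ℝ≥0∞ :=
  ∑' m : ℕ, (2:ℝ≥0∞)⁻¹ ^ m * (1 - cdfE μ (eRat m : ℝ))

lemma Phi_le_two (μ : ProbabilityMeasure ℝ) : Phi μ ≤ 2 := by
  have h1 : Phi μ ≤ ∑' m : ℕ, (2:ℝ≥0∞)⁻¹ ^ m * 1 :=
    ENNReal.tsum_le_tsum fun m => mul_le_mul_right (tsub_le_self.trans le_rfl) _
  have h2 : ∑' m : ℕ, (2:ℝ≥0∞)⁻¹ ^ m * 1 = 2 := by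
    simp only [mul_one]
    rw [ENNReal.tsum_geometric, ENNReal.one_sub_inv_two]
    simp
  exact h1.trans h2.le

lemma Phi_ne_top (μ : ProbabilityMeasure ℝ) : Phi μ ≠ ∞ :=
  ((Phi_le_two μ).trans_lt (by norm_num)).ne

lemma Phi_mono {μ ν : ProbabilityMeasure ℝ} (h : StLE μ ν) : Phi μ ≤ Phi ν :=
  ENNReal.tsum_le_tsum fun m => mul_le_mul_right (tsub_le_tsub_left (h _) 1) _

lemma cdfE_eq_of_Phi_eq {μ ν : ProbabilityMeasure ℝ} (h : StLE μ ν) (hP : Phi μ = Phi ν) :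
    ∀ s, cdfE μ s = cdfE ν s := by
  have hterm : ∀ m : ℕ, (2:ℝ≥0∞)⁻¹ ^ m * (1 - cdfE μ (eRat m : ℝ))
      = (2:ℝ≥0∞)⁻¹ ^ m * (1 - cdfE ν (eRat m : ℝ)) := by
    by_contra hc
    push_neg at hc
    obtain ⟨m, hm⟩ := hc
    have hle : ∀ m : ℕ, (2:ℝ≥0∞)⁻¹ ^ m * (1 - cdfE μ (eRat m : ℝ))
        ≤ (2:ℝ≥0∞)⁻¹ ^ m * (1 - cdfE ν (eRat m : ℝ)) :=
      fun m => mul_le_mul_right (tsub_le_tsub_left (h _) 1) _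
    have hlt := ENNReal.tsum_lt_tsum (Phi_ne_top μ) hle (lt_of_le_of_ne (hle m) hm)
    exact absurd hP hlt.ne
  refine cdfE_eq_of_rat ?_
  intro q
  obtain ⟨m, rfl⟩ := eRat_surjective q
  have h0 : ((2:ℝ≥0∞)⁻¹ ^ m) ≠ 0 := by
    apply pow_ne_zero
    simp [ENNReal.inv_ne_zero]
  have htop : ((2:ℝ≥0∞)⁻¹ ^ m) ≠ ∞ := by
    apply ENNReal.pow_ne_top
    simp
  have h1 := (ENNReal.mul_right_inj h0 htop).1 (hterm m)
  exact (ENNReal.sub_right_inj ENNReal.one_ne_top (cdfE_le_one _ _) (cdfE_le_one _ _)).1 h1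

lemma ae_eq_of_lintegral_eq {S : Type*} [MeasurableSpace S] (π : Measure S)
    {f g : S → ℝ≥0∞} (hf : Measurable f) (hg : Measurable g) (hle : ∀ t, f t ≤ g t)
    (hfin : ∫⁻ t, g t ∂π ≠ ∞) (heq : ∫⁻ t, f t ∂π = ∫⁻ t, g t ∂π) :
    ∀ᵐ t ∂π, f t = g t := by
  have hffin : ∫⁻ t, f t ∂π ≠ ∞ := by rw [heq]; exact hfin
  have hsub : ∫⁻ t, g t - f t ∂π = 0 := by
    rw [lintegral_sub hf hffin (Filter.Eventually.of_forall hle), heq, tsub_self]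
  have := (lintegral_eq_zero_iff (hg.sub hf)).1 hsub
  filter_upwards [this] with t ht
  simp only [Pi.sub_apply, Pi.zero_apply] at ht
  exact le_antisymm (hle t) (tsub_eq_zero_iff_le.mp ht)

lemma measurable_Phi_thePM {S : Type*} [MeasurableSpace S] (μlo μhi : ProbabilityMeasure ℝ)
    (hlohi : StLE μlo μhi) (J : S → ℚ → ℝ≥0∞) (hJ : ∀ q : ℚ, Measurable fun t => J t q) :
    Measurable fun t => Phi (thePM μlo μhi hlohi (J t)) := by
  unfold Phi
  refine Measurable.ennreal_tsum fun m => measurable_const.mul ?_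
  have he : (fun t => (1 : ℝ≥0∞) - cdfE (thePM μlo μhi hlohi (J t)) (eRat m : ℝ))
      = fun t => 1 - reg μlo μhi (J t) (eRat m : ℝ) :=
    funext fun t => by rw [cdfE_thePM]
  rw [he]
  exact measurable_const.sub
    (Measurable.iInf fun r => measurable_const.max ((hJ r.1).min measurable_const))

end FlowAux


set_option maxHeartbeats 2000000
open FlowAux

/-- The lattice of measurable flows valued in the order interval `[μlo, μhi]`,
modulo π-null sets and ordered by the a.e. first order stochastic dominance, is a
complete lattice: every nonempty subset has a least upper bound and a greatest
lower bound. -/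
theorem flow_lattice_complete {S : Type*} [MeasurableSpace S]
    (π : Measure S) [IsFiniteMeasure π]
    (μlo μhi : ProbabilityMeasure ℝ) (hlohi : StLE μlo μhi)
    (M : Set (S → ProbabilityMeasure ℝ)) (hM : M.Nonempty)
    (hMmeas : ∀ f ∈ M, @Measurable S (ProbabilityMeasure ℝ) _ (borel _) f)
    (hMint : ∀ f ∈ M, ∀ᵐ t ∂π, InInterval μlo μhi (f t)) :
    (∃ g : S → ProbabilityMeasure ℝ,
      @Measurable S (ProbabilityMeasure ℝ) _ (borel _) g ∧
      (∀ᵐ t ∂π, InInterval μlo μhi (g t)) ∧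
      (∀ f ∈ M, FlowLE π f g) ∧
      (∀ u : S → ProbabilityMeasure ℝ,
        @Measurable S (ProbabilityMeasure ℝ) _ (borel _) u →
        (∀ᵐ t ∂π, InInterval μlo μhi (u t)) →
        (∀ f ∈ M, FlowLE π f u) → FlowLE π g u)) ∧
    (∃ h : S → ProbabilityMeasure ℝ,
      @Measurable S (ProbabilityMeasure ℝ) _ (borel _) h ∧
      (∀ᵐ t ∂π, InInterval μlo μhi (h t)) ∧
      (∀ f ∈ M, FlowLE π h f) ∧
      (∀ v : S → ProbabilityMeasure ℝ,
        @Measurable S (ProbabilityMeasure ℝ) _ (borel _) v →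
        (∀ᵐ t ∂π, InInterval μlo μhi (v t)) →
        (∀ f ∈ M, FlowLE π v f) → FlowLE π v h)) := by
  classical
  obtain ⟨f₀, hf₀⟩ := hM
  constructor
  · -- supremum
    set Jm : (ℕ → S → ProbabilityMeasure ℝ) → S → ℚ → ℝ≥0∞ :=
      fun A t q => ⨅ m, cdfE (A m t) (q:ℝ) with hJm
    set G : (ℕ → S → ProbabilityMeasure ℝ) → S → ProbabilityMeasure ℝ :=
      fun A t => thePM μlo μhi hlohi (Jm A t) with hGdef
    set r : (ℕ → S → ProbabilityMeasure ℝ) → ℝ≥0∞ :=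
      fun A => ∫⁻ t, Phi (G A t) ∂π with hrdef
    have hJmeas : ∀ A : ℕ → S → ProbabilityMeasure ℝ, (∀ m, A m ∈ M) →
        ∀ q : ℚ, Measurable fun t => Jm A t q := fun A hA q =>
      Measurable.iInf fun m => Measurable.comp (measurable_cdfE (q:ℝ)) (hMmeas _ (hA m))
    have hGmeas : ∀ A, (∀ m, A m ∈ M) →
        @Measurable S (ProbabilityMeasure ℝ) _ (borel _) (G A) := fun A hA =>
      measurable_thePM μlo μhi hlohi _ (hJmeas A hA)
    have hPhimeas : ∀ A, (∀ m, A m ∈ M) → Measurable fun t => Phi (G A t) := fun A hA =>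
      measurable_Phi_thePM μlo μhi hlohi _ (hJmeas A hA)
    have hrle : ∀ A : ℕ → S → ProbabilityMeasure ℝ, r A ≤ 2 * π univ := by
      intro A
      rw [hrdef]
      calc ∫⁻ t, Phi (G A t) ∂π ≤ ∫⁻ _, 2 ∂π := lintegral_mono fun t => Phi_le_two _
      _ = 2 * π univ := by rw [lintegral_const]
    have hbfin : (2 : ℝ≥0∞) * π univ ≠ ∞ :=
      (ENNReal.mul_lt_top (by norm_num) (measure_lt_top _ _)).ne
    have hrfin : ∀ A, r A ≠ ∞ := fun A => ((hrle A).trans_lt hbfin.lt_top).ne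
    have hJsub : ∀ A A' : ℕ → S → ProbabilityMeasure ℝ, (∀ m, ∃ m', A' m' = A m) →
        ∀ t q, Jm A' t q ≤ Jm A t q := by
      intro A A' hsub t q
      refine le_iInf fun m => ?_
      obtain ⟨m', hm'⟩ := hsub m
      exact (iInf_le _ m').trans_eq (by rw [hm'])
    have hstleG : ∀ A A' : ℕ → S → ProbabilityMeasure ℝ, (∀ m, ∃ m', A' m' = A m) →
        ∀ t, StLE (G A t) (G A' t) := by
      intro A A' hsub t s
      show cdfE (G A' t) s ≤ cdfE (G A t) s
      rw [hGdef]
      simp only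
      rw [cdfE_thePM, cdfE_thePM]
      exact reg_mono_J μlo μhi (hJsub A A' hsub t) s
    have hrmono : ∀ A A' : ℕ → S → ProbabilityMeasure ℝ, (∀ m, ∃ m', A' m' = A m) →
        r A ≤ r A' := fun A A' hsub =>
      lintegral_mono fun t => Phi_mono (hstleG A A' hsub t)
    haveI hne : Nonempty {A : ℕ → S → ProbabilityMeasure ℝ // ∀ m, A m ∈ M} :=
      ⟨⟨fun _ => f₀, fun _ => hf₀⟩⟩
    have hRfin : (⨆ A : {A : ℕ → S → ProbabilityMeasure ℝ // ∀ m, A m ∈ M}, r A.1) ≠ ∞ := by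
      have h1 : (⨆ A : {A : ℕ → S → ProbabilityMeasure ℝ // ∀ m, A m ∈ M}, r A.1)
          ≤ 2 * π univ := iSup_le fun A => hrle A.1
      exact (h1.trans_lt hbfin.lt_top).ne
    have hpick : ∀ i : ℕ, ∃ A : {A : ℕ → S → ProbabilityMeasure ℝ // ∀ m, A m ∈ M},
        (⨆ A : {A : ℕ → S → ProbabilityMeasure ℝ // ∀ m, A m ∈ M}, r A.1)
          ≤ r A.1 + ((i:ℝ≥0∞)+1)⁻¹ := by
      intro i
      by_contra hcon
      push_neg at hcon
      have hub : ∀ A : {A : ℕ → S → ProbabilityMeasure ℝ // ∀ m, A m ∈ M},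
          r A.1 + ((i:ℝ≥0∞)+1)⁻¹
            ≤ ⨆ A : {A : ℕ → S → ProbabilityMeasure ℝ // ∀ m, A m ∈ M}, r A.1 :=
        fun A => (hcon A).le
      have h2 : (⨆ A : {A : ℕ → S → ProbabilityMeasure ℝ // ∀ m, A m ∈ M}, r A.1)
          + ((i:ℝ≥0∞)+1)⁻¹
          ≤ ⨆ A : {A : ℕ → S → ProbabilityMeasure ℝ // ∀ m, A m ∈ M}, r A.1 := by
        rw [ENNReal.iSup_add]
        exact iSup_le hub
      have h3 : (⨆ A : {A : ℕ → S → ProbabilityMeasure ℝ // ∀ m, A m ∈ M}, r A.1)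
          < (⨆ A : {A : ℕ → S → ProbabilityMeasure ℝ // ∀ m, A m ∈ M}, r A.1)
            + ((i:ℝ≥0∞)+1)⁻¹ :=
        ENNReal.lt_add_right hRfin
          (ENNReal.inv_ne_zero.mpr (by simp [ENNReal.add_eq_top]))
      exact absurd (h3.trans_le h2) (lt_irrefl _)
    choose Aseq hAseq using hpick
    set H : ℕ → S → ProbabilityMeasure ℝ :=
      fun m => (Aseq (Nat.unpair m).1).1 (Nat.unpair m).2 with hHdef
    have hHmem : ∀ m, H m ∈ M := fun m => (Aseq _).2 _
    have hHsub : ∀ i m, ∃ m', H m' = (Aseq i).1 m := fun i m =>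
      ⟨Nat.pair i m, by rw [hHdef]; simp only [Nat.unpair_pair]⟩
    have hrH_le : r H ≤ ⨆ A : {A : ℕ → S → ProbabilityMeasure ℝ // ∀ m, A m ∈ M}, r A.1 :=
      le_iSup_of_le ⟨H, hHmem⟩ le_rfl
    have hRH : (⨆ A : {A : ℕ → S → ProbabilityMeasure ℝ // ∀ m, A m ∈ M}, r A.1) ≤ r H := by
      refine ENNReal.le_of_forall_pos_le_add fun ε hε _ => ?_
      obtain ⟨n, hn⟩ := ENNReal.exists_inv_nat_lt
        (show ((ε : ℝ≥0∞)) ≠ 0 by exact_mod_cast hε.ne')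
      have hstep : ((n:ℝ≥0∞)+1)⁻¹ ≤ (n:ℝ≥0∞)⁻¹ := by
        gcongr
        exact le_add_of_nonneg_right zero_le_one
      calc (⨆ A : {A : ℕ → S → ProbabilityMeasure ℝ // ∀ m, A m ∈ M}, r A.1)
          ≤ r (Aseq n).1 + ((n:ℝ≥0∞)+1)⁻¹ := hAseq n
        _ ≤ r H + ε := add_le_add (hrmono _ _ (hHsub n)) (hstep.trans hn.le)
    -- the candidate supremum
    refine ⟨G H, hGmeas H hHmem, ?_, ?_, ?_⟩
    · exact Filter.Eventually.of_forall fun t =>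
        ⟨stle_lo_thePM μlo μhi hlohi _, stle_thePM_hi μlo μhi hlohi _⟩
    · -- upper bound
      intro f hf
      set A' : ℕ → S → ProbabilityMeasure ℝ := fun m => Nat.casesOn m f H with hA'def
      have hA'mem : ∀ m, A' m ∈ M := by
        intro m
        cases m with
        | zero => exact hf
        | succ m => exact hHmem m
      have hsub : ∀ m, ∃ m', A' m' = H m := fun m => ⟨m+1, rfl⟩
      have hr1 : r H ≤ r A' := hrmono H A' hsub
      have hr2 : r A' ≤ r H :=
        (le_iSup_of_le (ι := {A : ℕ → S → ProbabilityMeasure ℝ // ∀ m, A m ∈ M})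
          ⟨A', hA'mem⟩ le_rfl).trans hRH
      have haeq : ∀ᵐ t ∂π, Phi (G H t) = Phi (G A' t) :=
        ae_eq_of_lintegral_eq π (hPhimeas H hHmem) (hPhimeas A' hA'mem)
          (fun t => Phi_mono (hstleG H A' hsub t)) (hrfin A')
          (le_antisymm hr1 hr2)
      filter_upwards [haeq, hMint f hf] with t hPhi hint
      have hcdfeq : ∀ s, cdfE (G H t) s = cdfE (G A' t) s :=
        cdfE_eq_of_Phi_eq (hstleG H A' hsub t) hPhi
      have h1 : StLE (f t) (G A' t) := by
        refine stle_thePM_of μlo μhi hlohi hint.2 fun q => ?_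
        exact iInf_le (fun m => cdfE (A' m t) (q:ℝ)) 0
      intro s
      show cdfE (G H t) s ≤ cdfE (f t) s
      rw [hcdfeq s]
      exact h1 s
    · -- least upper bound
      intro u _ huint hub
      have hall : ∀ᵐ t ∂π, ∀ m, StLE (H m t) (u t) :=
        (MeasureTheory.ae_all_iff).2 fun m => hub (H m) (hHmem m)
      filter_upwards [hall, huint] with t hm hint
      refine thePM_stle_of μlo μhi hlohi hint.1 fun q => ?_
      exact le_iInf fun m => hm m (q:ℝ)
  · -- infimum
    set Jm : (ℕ → S → ProbabilityMeasure ℝ) → S → ℚ → ℝ≥0∞ :=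
      fun A t q => ⨆ m, cdfE (A m t) (q:ℝ) with hJm
    set G : (ℕ → S → ProbabilityMeasure ℝ) → S → ProbabilityMeasure ℝ :=
      fun A t => thePM μlo μhi hlohi (Jm A t) with hGdef
    set r : (ℕ → S → ProbabilityMeasure ℝ) → ℝ≥0∞ :=
      fun A => ∫⁻ t, Phi (G A t) ∂π with hrdef
    have hJmeas : ∀ A : ℕ → S → ProbabilityMeasure ℝ, (∀ m, A m ∈ M) →
        ∀ q : ℚ, Measurable fun t => Jm A t q := fun A hA q =>
      Measurable.iSup fun m => Measurable.comp (measurable_cdfE (q:ℝ)) (hMmeas _ (hA m))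
    have hGmeas : ∀ A, (∀ m, A m ∈ M) →
        @Measurable S (ProbabilityMeasure ℝ) _ (borel _) (G A) := fun A hA =>
      measurable_thePM μlo μhi hlohi _ (hJmeas A hA)
    have hPhimeas : ∀ A, (∀ m, A m ∈ M) → Measurable fun t => Phi (G A t) := fun A hA =>
      measurable_Phi_thePM μlo μhi hlohi _ (hJmeas A hA)
    have hrle : ∀ A : ℕ → S → ProbabilityMeasure ℝ, r A ≤ 2 * π univ := by
      intro A
      rw [hrdef]
      calc ∫⁻ t, Phi (G A t) ∂π ≤ ∫⁻ _, 2 ∂π := lintegral_mono fun t => Phi_le_two _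
      _ = 2 * π univ := by rw [lintegral_const]
    have hbfin : (2 : ℝ≥0∞) * π univ ≠ ∞ :=
      (ENNReal.mul_lt_top (by norm_num) (measure_lt_top _ _)).ne
    have hrfin : ∀ A, r A ≠ ∞ := fun A => ((hrle A).trans_lt hbfin.lt_top).ne
    have hJsub : ∀ A A' : ℕ → S → ProbabilityMeasure ℝ, (∀ m, ∃ m', A' m' = A m) →
        ∀ t q, Jm A t q ≤ Jm A' t q := by
      intro A A' hsub t q
      refine iSup_le fun m => ?_
      obtain ⟨m', hm'⟩ := hsub m
      exact le_trans (le_of_eq (by rw [hm'])) (le_iSup _ m')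
    have hstleG : ∀ A A' : ℕ → S → ProbabilityMeasure ℝ, (∀ m, ∃ m', A' m' = A m) →
        ∀ t, StLE (G A' t) (G A t) := by
      intro A A' hsub t s
      show cdfE (G A t) s ≤ cdfE (G A' t) s
      rw [hGdef]
      simp only
      rw [cdfE_thePM, cdfE_thePM]
      exact reg_mono_J μlo μhi (hJsub A A' hsub t) s
    have hrmono : ∀ A A' : ℕ → S → ProbabilityMeasure ℝ, (∀ m, ∃ m', A' m' = A m) →
        r A' ≤ r A := fun A A' hsub =>
      lintegral_mono fun t => Phi_mono (hstleG A A' hsub t)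
    haveI hne : Nonempty {A : ℕ → S → ProbabilityMeasure ℝ // ∀ m, A m ∈ M} :=
      ⟨⟨fun _ => f₀, fun _ => hf₀⟩⟩
    have hRfin : (⨅ A : {A : ℕ → S → ProbabilityMeasure ℝ // ∀ m, A m ∈ M}, r A.1) ≠ ∞ := by
      have h1 : (⨅ A : {A : ℕ → S → ProbabilityMeasure ℝ // ∀ m, A m ∈ M}, r A.1)
          ≤ 2 * π univ :=
        (iInf_le _ ⟨fun _ => f₀, fun _ => hf₀⟩).trans (hrle _)
      exact (h1.trans_lt hbfin.lt_top).ne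
    have hpick : ∀ i : ℕ, ∃ A : {A : ℕ → S → ProbabilityMeasure ℝ // ∀ m, A m ∈ M},
        r A.1 ≤ (⨅ A : {A : ℕ → S → ProbabilityMeasure ℝ // ∀ m, A m ∈ M}, r A.1)
          + ((i:ℝ≥0∞)+1)⁻¹ := by
      intro i
      have h3 : (⨅ A : {A : ℕ → S → ProbabilityMeasure ℝ // ∀ m, A m ∈ M}, r A.1)
          < (⨅ A : {A : ℕ → S → ProbabilityMeasure ℝ // ∀ m, A m ∈ M}, r A.1)
            + ((i:ℝ≥0∞)+1)⁻¹ :=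
        ENNReal.lt_add_right hRfin
          (ENNReal.inv_ne_zero.mpr (by simp [ENNReal.add_eq_top]))
      obtain ⟨A, hA⟩ := iInf_lt_iff.mp h3
      exact ⟨A, hA.le⟩
    choose Aseq hAseq using hpick
    set H : ℕ → S → ProbabilityMeasure ℝ :=
      fun m => (Aseq (Nat.unpair m).1).1 (Nat.unpair m).2 with hHdef
    have hHmem : ∀ m, H m ∈ M := fun m => (Aseq _).2 _
    have hHsub : ∀ i m, ∃ m', H m' = (Aseq i).1 m := fun i m =>
      ⟨Nat.pair i m, by rw [hHdef]; simp only [Nat.unpair_pair]⟩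
    have hrH_ge : (⨅ A : {A : ℕ → S → ProbabilityMeasure ℝ // ∀ m, A m ∈ M}, r A.1) ≤ r H :=
      iInf_le_of_le ⟨H, hHmem⟩ le_rfl
    have hRH : r H ≤ ⨅ A : {A : ℕ → S → ProbabilityMeasure ℝ // ∀ m, A m ∈ M}, r A.1 := by
      refine ENNReal.le_of_forall_pos_le_add fun ε hε _ => ?_
      obtain ⟨n, hn⟩ := ENNReal.exists_inv_nat_lt
        (show ((ε : ℝ≥0∞)) ≠ 0 by exact_mod_cast hε.ne')
      have hstep : ((n:ℝ≥0∞)+1)⁻¹ ≤ (n:ℝ≥0∞)⁻¹ := by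
        gcongr
        exact le_add_of_nonneg_right zero_le_one
      calc r H ≤ r (Aseq n).1 := hrmono _ _ (hHsub n)
        _ ≤ (⨅ A : {A : ℕ → S → ProbabilityMeasure ℝ // ∀ m, A m ∈ M}, r A.1)
            + ((n:ℝ≥0∞)+1)⁻¹ := hAseq n
        _ ≤ _ + ε := add_le_add le_rfl (hstep.trans hn.le)
    refine ⟨G H, hGmeas H hHmem, ?_, ?_, ?_⟩
    · exact Filter.Eventually.of_forall fun t =>
        ⟨stle_lo_thePM μlo μhi hlohi _, stle_thePM_hi μlo μhi hlohi _⟩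
    · -- lower bound
      intro f hf
      set A' : ℕ → S → ProbabilityMeasure ℝ := fun m => Nat.casesOn m f H with hA'def
      have hA'mem : ∀ m, A' m ∈ M := by
        intro m
        cases m with
        | zero => exact hf
        | succ m => exact hHmem m
      have hsub : ∀ m, ∃ m', A' m' = H m := fun m => ⟨m+1, rfl⟩
      have hr1 : r A' ≤ r H := hrmono H A' hsub
      have hr2 : r H ≤ r A' :=
        hRH.trans (iInf_le_of_le (ι := {A : ℕ → S → ProbabilityMeasure ℝ // ∀ m, A m ∈ M})
          ⟨A', hA'mem⟩ le_rfl)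
      have haeq : ∀ᵐ t ∂π, Phi (G A' t) = Phi (G H t) :=
        ae_eq_of_lintegral_eq π (hPhimeas A' hA'mem) (hPhimeas H hHmem)
          (fun t => Phi_mono (hstleG H A' hsub t)) (hrfin H)
          (le_antisymm hr1 hr2)
      filter_upwards [haeq, hMint f hf] with t hPhi hint
      have hcdfeq : ∀ s, cdfE (G A' t) s = cdfE (G H t) s :=
        cdfE_eq_of_Phi_eq (hstleG H A' hsub t) hPhi
      have h1 : StLE (G A' t) (f t) := by
        refine thePM_stle_of μlo μhi hlohi hint.1 fun q => ?_
        exact le_iSup (fun m => cdfE (A' m t) (q:ℝ)) 0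
      intro s
      show cdfE (f t) s ≤ cdfE (G H t) s
      rw [← hcdfeq s]
      exact h1 s
    · -- greatest lower bound
      intro v _ hvint hlb
      have hall : ∀ᵐ t ∂π, ∀ m, StLE (v t) (H m t) :=
        (MeasureTheory.ae_all_iff).2 fun m => hlb (H m) (hHmem m)
      filter_upwards [hall, hvint] with t hm hint
      refine stle_thePM_of μlo μhi hlohi hint.2 fun q => ?_
      exact iSup_le fun m => hm m (q:ℝ)
end
end

section
/- Let γ : ℝ² → ℝ be bounded measurable with decreasing differences in (x,y), and define φ(x,μ) := ∫ γ(x,y) dμ(y) on ℝ × 𝒫(ℝ). Then φ has decreasing differences in (x,μ) with respect to the usual order on ℝ and first order stochastic dominance on 𝒫(ℝ): for all x̄ ≥ x and μ̄ ≥ˢᵗ μ, φ(x̄,μ̄) - φ(x,μ̄) ≤ φ(x̄,μ) - φ(x,μ). -/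
open MeasureTheory Set

private lemma Iio_le_of_Iic_le (μ μ' : Measure ℝ)
    (h : ∀ s : ℝ, μ' (Iic s) ≤ μ (Iic s)) (b : ℝ) : μ' (Iio b) ≤ μ (Iio b) := by
  have hunion : Iio b = ⋃ n : ℕ, Iic (b - 1 / (n + 1)) := by
    ext y
    simp only [mem_Iio, mem_iUnion, mem_Iic]
    constructor
    · intro hy
      obtain ⟨n, hn⟩ := exists_nat_one_div_lt (show (0:ℝ) < b - y by linarith)
      exact ⟨n, by push_cast at hn ⊢; linarith⟩
    · rintro ⟨n, hn⟩
      have : (0:ℝ) < 1 / (n + 1) := by positivity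
      linarith
  have hmono : Monotone (fun n : ℕ => Iic (b - 1 / (n + 1))) := by
    intro m n hmn
    apply Iic_subset_Iic.mpr
    have h1 : (1:ℝ) / (n + 1) ≤ 1 / (m + 1) := by
      apply one_div_le_one_div_of_le (by positivity)
      exact_mod_cast by omega
    linarith
  rw [hunion, hmono.directed_le.measure_iUnion,
    hmono.directed_le.measure_iUnion]
  exact iSup_mono fun n => h _

private lemma lowerSet_measure_le (μ μ' : Measure ℝ)
    [IsProbabilityMeasure μ] [IsProbabilityMeasure μ']
    (h : ∀ s : ℝ, μ' (Iic s) ≤ μ (Iic s)) {S : Set ℝ} (hS : IsLowerSet S) :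
    μ' S ≤ μ S := by
  rcases S.eq_empty_or_nonempty with rfl | hne
  · simp
  by_cases hbdd : BddAbove S
  · set b := sSup S with hb
    have hsub : S ⊆ Iic b := fun y hy => le_csSup hbdd hy
    have hsub2 : Iio b ⊆ S := by
      intro y hy
      obtain ⟨s, hs, hys⟩ := exists_lt_of_lt_csSup hne hy
      exact hS hys.le hs
    by_cases hbS : b ∈ S
    · have : S = Iic b := Subset.antisymm hsub (fun y hy => by
        rcases lt_or_eq_of_le (mem_Iic.mp hy) with h' | h'
        · exact hsub2 h'
        · rwa [h'])
      rw [this]; exact h b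
    · have : S = Iio b := by
        apply Subset.antisymm _ hsub2
        intro y hy
        rcases lt_or_eq_of_le (show y ≤ b from hsub hy) with h' | h'
        · exact h'
        · exact absurd (h' ▸ hy) hbS
      rw [this]; exact Iio_le_of_Iic_le μ μ' h b
  · have : S = univ := by
      apply eq_univ_of_forall
      intro y
      obtain ⟨s, hs, hys⟩ := not_bddAbove_iff.mp hbdd y
      exact hS hys.le hs
    rw [this]; simp

/-- Mean-field interaction of order 1: if `γ` is bounded, measurable and has decreasing
differences, then `φ(x, μ) := ∫ γ(x,y) dμ(y)` has decreasing differences with respect to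
the usual order on ℝ and first order stochastic dominance on `𝒫(ℝ)`. -/
theorem order_one_interaction_decreasing_differences
    (γ : ℝ → ℝ → ℝ)
    (hγmeas : Measurable (fun p : ℝ × ℝ => γ p.1 p.2))
    (hγbdd : ∃ C : ℝ, ∀ x y, |γ x y| ≤ C)
    (hγ : ∀ x x' y y' : ℝ, x ≤ x' → y ≤ y' →
      γ x' y' - γ x y' ≤ γ x' y - γ x y) :
    ∀ x x' : ℝ, x ≤ x' →
      ∀ μ μ' : Measure ℝ, IsProbabilityMeasure μ → IsProbabilityMeasure μ' →
        -- μ ≤ˢᵗ μ'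
        (∀ s : ℝ, μ' (Iic s) ≤ μ (Iic s)) →
        (∫ y, γ x' y ∂μ') - (∫ y, γ x y ∂μ')
          ≤ (∫ y, γ x' y ∂μ) - (∫ y, γ x y ∂μ) := by
  intro x x' hxx' μ μ' hμ hμ' hdom
  obtain ⟨C, hC⟩ := hγbdd
  have hC0 : 0 ≤ C := (abs_nonneg _).trans (hC 0 0)
  -- measurability of slices
  have hmeas : ∀ z : ℝ, Measurable (fun y => γ z y) := fun z =>
    hγmeas.comp (measurable_const.prodMk measurable_id)
  -- integrability of slices w.r.t. any probability measure
  have hint : ∀ (ν : Measure ℝ), IsProbabilityMeasure ν → ∀ z : ℝ,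
      Integrable (fun y => γ z y) ν := by
    intro ν hν z
    exact (integrable_const C).mono' (hmeas z).aestronglyMeasurable
      (Filter.Eventually.of_forall fun y => by simpa using hC z y)
  -- the difference function
  set g : ℝ → ℝ := fun y => γ x' y - γ x y with hg
  have hganti : Antitone g := fun y y' hyy' => hγ x x' y y' hxx' hyy'
  have hgmeas : Measurable g := (hmeas x').sub (hmeas x)
  set f : ℝ → ℝ := fun y => g y + 2 * C with hf
  have hfnn : ∀ y, 0 ≤ f y := by
    intro y
    have h1 := abs_le.mp (hC x' y)
    have h2 := abs_le.mp (hC x y)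
    simp only [hf, hg]
    linarith [h1.1, h2.2]
  have hfmeas : Measurable f := hgmeas.add measurable_const
  have hfint : ∀ (ν : Measure ℝ), IsProbabilityMeasure ν → Integrable f ν := by
    intro ν hν
    exact (integrable_const (4 * C)).mono' hfmeas.aestronglyMeasurable
      (Filter.Eventually.of_forall fun y => by
        have h1 := abs_le.mp (hC x' y)
        have h2 := abs_le.mp (hC x y)
        rw [Real.norm_eq_abs, abs_of_nonneg (hfnn y)]
        simp only [hf, hg]
        linarith [h1.2, h2.1])
  -- key: ∫ f dμ' ≤ ∫ f dμ via layer cake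
  have key : ∫ y, f y ∂μ' ≤ ∫ y, f y ∂μ := by
    have hae : ∀ (ν : Measure ℝ), 0 ≤ᵐ[ν] f :=
      fun ν => Filter.Eventually.of_forall hfnn
    have lc : ∀ (ν : Measure ℝ), IsProbabilityMeasure ν →
        ∫⁻ y, ENNReal.ofReal (f y) ∂ν = ∫⁻ t in Ioi (0:ℝ), ν {a | t < f a} := by
      intro ν hν
      exact lintegral_eq_lintegral_meas_lt ν (hae ν) (hfmeas.aemeasurable)
    have hle : ∫⁻ y, ENNReal.ofReal (f y) ∂μ' ≤ ∫⁻ y, ENNReal.ofReal (f y) ∂μ := by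
      rw [lc μ' hμ', lc μ hμ]
      apply lintegral_mono_ae
      apply Filter.Eventually.of_forall
      intro t
      apply lowerSet_measure_le μ μ' hdom
      intro y y' hyy' hy
      simp only [mem_setOf_eq] at hy ⊢
      have := hganti hyy'
      simp only [hf] at hy ⊢
      linarith
    rw [integral_eq_lintegral_of_nonneg_ae (hae μ') hfmeas.aestronglyMeasurable,
      integral_eq_lintegral_of_nonneg_ae (hae μ) hfmeas.aestronglyMeasurable]
    exact ENNReal.toReal_mono ((hfint μ hμ).lintegral_lt_top).ne hle
  -- unfold f back to the statement
  have expand : ∀ (ν : Measure ℝ), IsProbabilityMeasure ν →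
      ∫ y, f y ∂ν = (∫ y, γ x' y ∂ν) - (∫ y, γ x y ∂ν) + 2 * C := by
    intro ν hν
    have h1 : Integrable g ν := (hint ν hν x').sub (hint ν hν x)
    rw [hf, integral_add h1 (integrable_const _), integral_const]
    simp [hg, integral_sub (hint ν hν x') (hint ν hν x), hν.measure_univ]
  rw [expand μ' hμ', expand μ hμ] at key
  linarith
end
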